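/- arXiv:1701.05843 — 10 statements merged into one kernel-verified Lean document; each statement's English description precedes it below -/
import Mathlib

section
/- The determinant of the matrix A equals 1 (equivalently, A belongs to SL(2n+1, ℤ)). -/
/-!
The sequence `d` is Sylvester's sequence with a leading `1`: `d (k + 2) - d (k + 1) = (d (k + 1) - 1)²`
for `k ≥ 1`, which telescopes to `a i = 2 + ∑_{1 ≤ k < i} (a k - 1)²` for `a i := d (i + 1)`, `i ≥ 1`,
while `a 0 = 1`. For such a sequence the arrowhead
matrix has the Cholesky factorization `A = Uᵀ U`, where column `i ≥ 1` of the upper unitriangular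
matrix `U` is `(1, 1 - a 1, …, 1 - a (i - 1), 1, 0, …, 0)`; hence `det A = (det U)² = 1`.
-/

open Finset Matrix

section Sylvester

variable {R : Type*} [CommRing R] {d : ℕ → R}
  (hdk : ∀ k : ℕ, 2 ≤ k → d k = 1 + ∏ j ∈ Icc 1 (k - 1), d j)
include hdk

theorem sylvester_sub_one_eq_prod {k : ℕ} (hk : 1 ≤ k) :
    d (k + 1) - 1 = ∏ j ∈ Icc 1 k, d j := by
  rw [hdk (k + 1) (by omega), Nat.add_sub_cancel, add_sub_cancel_left]

theorem sylvester_succ_succ {k : ℕ} (hk : 1 ≤ k) :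
    d (k + 2) = d (k + 1) ^ 2 - d (k + 1) + 1 := by
  rw [hdk (k + 2) (by omega), show k + 2 - 1 = k + 1 by omega, prod_Icc_succ_top (by omega),
    ← sylvester_sub_one_eq_prod hdk hk]
  ring

theorem sylvester_eq_two_add_sum_sq (hd1 : d 1 = 1) {i : ℕ} (hi : 1 ≤ i) :
    d (i + 1) = 2 + ∑ k ∈ Ico 1 i, (d (k + 1) - 1) ^ 2 := by
  induction i, hi using Nat.le_induction with
  | base => norm_num [hdk 2 le_rfl, hd1]
  | succ i hi ih =>
    rw [sum_Ico_succ_top hi, ← add_assoc, ← ih, sylvester_succ_succ hdk hi]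
    ring

end Sylvester

section Arrowhead

variable {R : Type*} [CommRing R]

def arrowhead (N : ℕ) (a : ℕ → R) : Matrix (Fin N) (Fin N) R :=
  of fun i j => if i = j then a i else if i.val = 0 ∨ j.val = 0 then 1 else 0

def arrowheadFactorEntry (a : ℕ → R) (k i : ℕ) : R :=
  if k = i ∨ k = 0 then 1 else if k < i then 1 - a k else 0

def arrowheadFactor (N : ℕ) (a : ℕ → R) : Matrix (Fin N) (Fin N) R :=
  of fun k i => arrowheadFactorEntry a k i

variable {a : ℕ → R}

theorem arrowheadFactorEntry_of_lt {k i : ℕ} (h : i < k) : arrowheadFactorEntry a k i = 0 := by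
  simp only [arrowheadFactorEntry]
  rw [if_neg (by omega), if_neg (by omega)]

theorem arrowheadFactorEntry_self (i : ℕ) : arrowheadFactorEntry a i i = 1 :=
  if_pos (Or.inl rfl)

theorem arrowheadFactorEntry_zero (i : ℕ) : arrowheadFactorEntry a 0 i = 1 :=
  if_pos (Or.inr rfl)

theorem arrowheadFactorEntry_of_pos_of_lt {k i : ℕ} (hk : 1 ≤ k) (h : k < i) :
    arrowheadFactorEntry a k i = 1 - a k := by
  simp only [arrowheadFactorEntry]
  rw [if_neg (by omega), if_pos h]

theorem det_arrowheadFactor (N : ℕ) : (arrowheadFactor N a).det = 1 := by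
  have hU : (arrowheadFactor N a).IsUpperTriangular := fun k i h =>
    arrowheadFactorEntry_of_lt (Fin.lt_def.mp h)
  rw [det_of_isUpperTriangular hU]
  exact prod_eq_one fun i _ => arrowheadFactorEntry_self i

variable (ha0 : a 0 = 1) (ha : ∀ i, 1 ≤ i → a i = 2 + ∑ k ∈ Ico 1 i, (a k - 1) ^ 2)
include ha0 ha

theorem sum_range_arrowheadFactorEntry_mul {i j : ℕ} (hij : i ≤ j) :
    ∑ k ∈ range (i + 1), arrowheadFactorEntry a k i * arrowheadFactorEntry a k j =
      if i = j then a i else if i = 0 then 1 else 0 := by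
  rcases Nat.eq_zero_or_pos i with rfl | hi
  · rw [sum_range_one, arrowheadFactorEntry_zero, arrowheadFactorEntry_zero, mul_one]
    by_cases h : 0 = j
    · rw [if_pos h, ha0]
    · rw [if_neg h, if_pos rfl]
  have hcols : ∑ k ∈ range i, arrowheadFactorEntry a k i * arrowheadFactorEntry a k j =
      a i - 1 := by
    rw [range_eq_Ico, sum_eq_sum_Ico_succ_bot hi, arrowheadFactorEntry_zero,
      arrowheadFactorEntry_zero, ha i hi]
    have hsq : ∀ k ∈ Ico 1 i, arrowheadFactorEntry a k i * arrowheadFactorEntry a k j =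
        (a k - 1) ^ 2 := fun k hk => by
      rw [mem_Ico] at hk
      rw [arrowheadFactorEntry_of_pos_of_lt hk.1 hk.2,
        arrowheadFactorEntry_of_pos_of_lt hk.1 (by omega)]
      ring
    rw [sum_congr rfl hsq]
    ring
  rw [sum_range_succ, hcols, arrowheadFactorEntry_self, if_neg hi.ne']
  rcases hij.eq_or_lt with rfl | hlt
  · rw [arrowheadFactorEntry_self, if_pos rfl]
    ring
  · rw [arrowheadFactorEntry_of_pos_of_lt hi hlt, if_neg hlt.ne]
    ring

theorem sum_range_arrowheadFactorEntry_mul_of_lt {N i j : ℕ} (hi : i < N) (hj : j < N) :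
    ∑ k ∈ range N, arrowheadFactorEntry a k i * arrowheadFactorEntry a k j =
      if i = j then a i else if i = 0 ∨ j = 0 then 1 else 0 := by
  wlog hij : i ≤ j generalizing i j
  · have := this hj hi (by omega)
    simp only [mul_comm (arrowheadFactorEntry a _ j)] at this
    rw [this]
    rcases eq_or_ne i j with rfl | hne
    · rfl
    · simp only [if_neg hne, if_neg hne.symm, or_comm]
  rw [← sum_subset (range_subset_range.mpr (by omega : i + 1 ≤ N)) fun k _ hk => by
      rw [arrowheadFactorEntry_of_lt (by simpa using hk), zero_mul],
    sum_range_arrowheadFactorEntry_mul ha0 ha hij]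
  split_ifs <;> first | rfl | omega

theorem transpose_arrowheadFactor_mul_self (N : ℕ) :
    (arrowheadFactor N a)ᵀ * arrowheadFactor N a = arrowhead N a := by
  ext i j
  simp only [mul_apply, transpose_apply, arrowheadFactor, arrowhead, of_apply, ← Fin.val_inj]
  rw [Fin.sum_univ_eq_sum_range (fun k => arrowheadFactorEntry a k i * arrowheadFactorEntry a k j)]
  exact sum_range_arrowheadFactorEntry_mul_of_lt ha0 ha i.isLt j.isLt

theorem det_arrowhead (N : ℕ) : (arrowhead N a).det = 1 := by
  rw [← transpose_arrowheadFactor_mul_self ha0 ha, det_mul, det_transpose, det_arrowheadFactor,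
    one_mul]

end Arrowhead

theorem stmt0_general (n : ℕ) (d : ℕ → ℤ)
    (hd1 : d 1 = 1)
    (hdk : ∀ k : ℕ, 2 ≤ k → d k = 1 + ∏ j ∈ Finset.Icc 1 (k - 1), d j)
    (A : Matrix (Fin (2 * n + 1)) (Fin (2 * n + 1)) ℤ)
    (hA : ∀ i j : Fin (2 * n + 1), A i j =
      if i = j then d (i.val + 1)
      else if i.val = 0 ∨ j.val = 0 then 1 else 0) :
    A.det = 1 := by
  have hA_eq : A = arrowhead (2 * n + 1) fun i => d (i + 1) := by
    ext i j
    exact hA i j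
  rw [hA_eq]
  exact det_arrowhead hd1 (fun i hi => sylvester_eq_two_add_sum_sq hdk hd1 hi) _

/-- The arrowhead matrix `A` built from the sequence `d` has determinant 1,
i.e. `A ∈ SL(2n+1, ℤ)`. -/
theorem stmt0 (n : ℕ) (hn : 1 ≤ n) (d : ℕ → ℤ)
    (hd1 : d 1 = 1)
    (hdk : ∀ k : ℕ, 2 ≤ k → d k = 1 + ∏ j ∈ Finset.Icc 1 (k - 1), d j)
    (A : Matrix (Fin (2 * n + 1)) (Fin (2 * n + 1)) ℤ)
    (hA : ∀ i j : Fin (2 * n + 1), A i j =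
      if i = j then d (i.val + 1)
      else if i.val = 0 ∨ j.val = 0 then 1 else 0) :
    A.det = 1 :=
  stmt0_general n d hd1 hdk A hA
end

section
/- The characteristic polynomial of A, regarded as a matrix with real entries, has 2n+1 pairwise distinct real roots; that is, there exist real numbers λ₁ < λ₂ < … < λ_{2n+1}, each of which is a root of the characteristic polynomial of A over ℝ. In particular, every eigenvalue of A has multiplicity 1. -/
/-!
An arrowhead matrix whose arrow entries are nonzero and whose remaining diagonal entries are
pairwise distinct has only simple eigenvalues: an eigenvector vanishing at the tip of the arrow
is zero, while any two eigenvectors for a repeated eigenvalue could be combined into one that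
vanishes there. For `A`, the diagonal `d 2 < d 3 < ⋯` is the strictly increasing Sylvester
sequence `d (k + 1) = d k ^ 2 - d k + 1`. By the spectral theorem the characteristic polynomial
of a symmetric real matrix splits over `ℝ`, so simple eigenvalues are distinct real roots.
-/

open Polynomial Matrix

namespace Polynomial

variable {K : Type*} [Field K]

theorem exists_strictMono_isRoot_of_nodup_roots [LinearOrder K] {p : K[X]} {m : ℕ}
    (hp : p.roots.Nodup) (hm : p.roots.card = m) :
    ∃ lam : Fin m → K, StrictMono lam ∧ ∀ i, p.IsRoot (lam i) := by
  classical
  have hcard : p.roots.toFinset.card = m := by rw [Multiset.toFinset_card_of_nodup hp, hm]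
  refine ⟨p.roots.toFinset.orderEmbOfFin hcard, (p.roots.toFinset.orderEmbOfFin hcard).strictMono,
    fun i => isRoot_of_mem_roots ?_⟩
  exact Multiset.mem_toFinset.mp (p.roots.toFinset.orderEmbOfFin_mem hcard i)

theorem rootMultiplicity_eq_one_of_nodup_roots {p : K[X]} (hp : p.roots.Nodup) (hp₀ : p ≠ 0)
    {x : K} (hx : p.IsRoot x) : p.rootMultiplicity x = 1 := by
  classical
  rw [← count_roots]
  exact Multiset.count_eq_one_of_mem hp ((mem_roots hp₀).mpr hx)

end Polynomial

namespace Matrix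

theorem eq_zero_of_mulVec_eq_smul_of_apply_eq_zero {K n : Type*} [Field K] [Fintype n]
    [DecidableEq n] {B : Matrix n n K} {i₀ : n}
    (hzero : ∀ i j, i ≠ j → i ≠ i₀ → j ≠ i₀ → B i j = 0)
    (harrow : ∀ j, j ≠ i₀ → B i₀ j ≠ 0)
    (hdiag : Set.InjOn (fun i => B i i) {i₀}ᶜ)
    {μ : K} {u : n → K} (hu : B *ᵥ u = μ • u) (hu₀ : u i₀ = 0) : u = 0 := by
  have hrow : ∀ k, k ≠ i₀ → (B k k - μ) * u k = 0 := by
    intro k hk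
    have hk_row : ∑ l, B k l * u l = μ * u k := by
      simpa [mulVec, dotProduct] using congrFun hu k
    rw [Finset.sum_eq_single k (fun l _ hlk => by
      rcases eq_or_ne l i₀ with rfl | hl
      · rw [hu₀, mul_zero]
      · rw [hzero k l (Ne.symm hlk) hk hl, zero_mul]) (by simp)] at hk_row
    rw [sub_mul, hk_row, sub_self]
  by_contra hne
  obtain ⟨k, hk⟩ := Function.ne_iff.mp hne
  have hk₀ : k ≠ i₀ := by rintro rfl; exact hk hu₀
  have hμ : B k k = μ := sub_eq_zero.mp ((mul_eq_zero.mp (hrow k hk₀)).resolve_right hk)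
  -- `u` is supported at `k` alone, so the row of the tip reads `B i₀ k * u k = 0`.
  have hsupp : ∀ l, l ≠ k → u l = 0 := by
    intro l hlk
    rcases eq_or_ne l i₀ with rfl | hl
    · exact hu₀
    refine (mul_eq_zero.mp (hrow l hl)).resolve_left fun h => hlk ?_
    exact hdiag (Set.mem_compl_singleton_iff.mpr hl) (Set.mem_compl_singleton_iff.mpr hk₀)
      ((sub_eq_zero.mp h).trans hμ.symm)
  have htip : ∑ l, B i₀ l * u l = μ * u i₀ := by
    simpa [mulVec, dotProduct] using congrFun hu i₀
  rw [Finset.sum_eq_single k (fun l _ hlk => by rw [hsupp l hlk, mul_zero]) (by simp), hu₀,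
    mul_zero] at htip
  exact mul_ne_zero (harrow k hk₀) hk htip

namespace IsHermitian

variable {𝕜 n : Type*} [RCLike 𝕜] [Fintype n] [DecidableEq n] {A : Matrix n n 𝕜}

theorem injective_eigenvalues_of_eigenvector_eq_zero (hA : A.IsHermitian) (i₀ : n)
    (h : ∀ (μ : 𝕜) (u : n → 𝕜), A *ᵥ u = μ • u → u i₀ = 0 → u = 0) :
    Function.Injective hA.eigenvalues := by
  intro i j hij
  by_contra hne
  set b := hA.eigenvectorBasis
  have hb : ∀ k, A *ᵥ ⇑(b k) = (hA.eigenvalues k : 𝕜) • ⇑(b k) := fun k => by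
    rw [hA.mulVec_eigenvectorBasis k, RCLike.real_smul_eq_coe_smul (K := 𝕜)]
  set u := b i i₀ • b j - b j i₀ • b i
  have hu : u = 0 := by
    refine WithLp.ofLp_injective 2 (h (hA.eigenvalues i) _ ?_ ?_)
    · simp only [u, WithLp.ofLp_sub, WithLp.ofLp_smul, mulVec_sub, mulVec_smul, hb, hij,
        smul_comm (b i i₀), smul_comm (b j i₀), smul_sub]
    · simp [u, mul_comm]
  have horth := orthonormal_iff_ite.mp b.orthonormal
  have hbi₀ : b i i₀ = 0 := by
    simpa [u, inner_sub_right, inner_smul_right, horth, Ne.symm hne] using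
      congrArg (inner 𝕜 (b j)) hu
  have hbi : b i = 0 := WithLp.ofLp_injective 2 (h _ _ (hb i) hbi₀)
  simpa [hbi] using b.orthonormal.1 i

theorem nodup_roots_charpoly (hA : A.IsHermitian) (h : Function.Injective hA.eigenvalues) :
    A.charpoly.roots.Nodup := by
  rw [hA.roots_charpoly_eq_eigenvalues]
  exact Finset.univ.nodup.map (RCLike.ofReal_injective.comp h)

theorem card_roots_charpoly (hA : A.IsHermitian) : A.charpoly.roots.card = Fintype.card n := by
  rw [hA.roots_charpoly_eq_eigenvalues, Multiset.card_map, Finset.card_val, Finset.card_univ]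

end IsHermitian

end Matrix

section Sylvester

variable {d : ℕ → ℤ} (hd1 : d 1 = 1)
  (hdk : ∀ k : ℕ, 2 ≤ k → d k = 1 + ∏ j ∈ Finset.Icc 1 (k - 1), d j)
include hdk

theorem sylvester_succ {k : ℕ} (hk : 2 ≤ k) : d (k + 1) = d k ^ 2 - d k + 1 := by
  obtain ⟨j, rfl⟩ : ∃ j, k = j + 1 := ⟨k - 1, by omega⟩
  have hprod : ∏ i ∈ Finset.Icc 1 j, d i = d (j + 1) - 1 := by
    rw [hdk (j + 1) hk, Nat.add_sub_cancel]; ring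
  rw [hdk (j + 1 + 1) (by omega), Nat.add_sub_cancel, Finset.prod_Icc_succ_top (by omega), hprod]
  ring

include hd1

theorem two_le_sylvester {k : ℕ} (hk : 2 ≤ k) : 2 ≤ d k := by
  induction k, hk using Nat.le_induction with
  | base => simp [hdk 2 le_rfl, hd1]
  | succ k hk ih => rw [sylvester_succ hdk hk]; nlinarith

theorem strictMonoOn_sylvester : StrictMonoOn d (Set.Ici 2) :=
  strictMonoOn_of_lt_succ Set.ordConnected_Ici fun k _ hk _ => by
    rw [Order.succ_eq_add_one, sylvester_succ hdk hk]
    nlinarith [two_le_sylvester hd1 hdk hk]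

theorem injOn_sylvester_fin_succ {m : ℕ} :
    Set.InjOn (fun i : Fin (m + 1) => d (i.val + 1)) {0}ᶜ := fun i hi j hj hij => by
  have hi₀ := Fin.val_ne_zero_iff.mpr (Set.mem_compl_singleton_iff.mp hi)
  have hj₀ := Fin.val_ne_zero_iff.mpr (Set.mem_compl_singleton_iff.mp hj)
  have := (strictMonoOn_sylvester hd1 hdk).injOn (Set.mem_Ici.mpr (by omega))
    (Set.mem_Ici.mpr (by omega)) hij
  exact Fin.ext (by omega)

end Sylvester

theorem stmt1_general (n : ℕ) (d : ℕ → ℤ)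
    (hd1 : d 1 = 1)
    (hdk : ∀ k : ℕ, 2 ≤ k → d k = 1 + ∏ j ∈ Finset.Icc 1 (k - 1), d j)
    (A : Matrix (Fin (2 * n + 1)) (Fin (2 * n + 1)) ℤ)
    (hA : ∀ i j : Fin (2 * n + 1), A i j =
      if i = j then d (i.val + 1)
      else if i.val = 0 ∨ j.val = 0 then 1 else 0) :
    ∃ lam : Fin (2 * n + 1) → ℝ, StrictMono lam ∧
      (∀ i : Fin (2 * n + 1),
        ((A.map (Int.cast : ℤ → ℝ)).charpoly).IsRoot (lam i)) ∧
      (∀ x : ℝ, ((A.map (Int.cast : ℤ → ℝ)).charpoly).IsRoot x →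
        Polynomial.rootMultiplicity x ((A.map (Int.cast : ℤ → ℝ)).charpoly) = 1) := by
  set B := A.map (Int.cast : ℤ → ℝ)
  have hB : ∀ i j, B i j = if i = j then (d (i.val + 1) : ℝ)
      else if i.val = 0 ∨ j.val = 0 then 1 else 0 := fun i j => by
    simp only [B, map_apply, hA]; split_ifs <;> simp
  have hherm : B.IsHermitian := IsHermitian.ext fun i j => by
    simp only [star_trivial, hB, eq_comm (a := j), or_comm (a := j.val = 0)]
    split_ifs with h <;> simp [h]
  have hinj := hherm.injective_eigenvalues_of_eigenvector_eq_zero 0 fun μ u hu hu₀ =>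
    eq_zero_of_mulVec_eq_smul_of_apply_eq_zero (i₀ := 0)
      (fun i j hij hi hj => by
        simp [hB, hij, Fin.val_ne_zero_iff.mpr hi, Fin.val_ne_zero_iff.mpr hj])
      (fun j hj => by simp [hB, Ne.symm hj])
      (fun i hi j hj hij => injOn_sylvester_fin_succ hd1 hdk hi hj
        (by exact_mod_cast (by simpa [hB] using hij)))
      hu hu₀
  have hnodup := hherm.nodup_roots_charpoly hinj
  obtain ⟨lam, hmono, hroots⟩ := exists_strictMono_isRoot_of_nodup_roots hnodup
    (hherm.card_roots_charpoly.trans (Fintype.card_fin _))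
  exact ⟨lam, hmono, hroots, fun x hx =>
    rootMultiplicity_eq_one_of_nodup_roots hnodup (charpoly_monic B).ne_zero hx⟩

/-- The characteristic polynomial of the arrowhead matrix `A`, regarded over `ℝ`,
has `2n+1` pairwise distinct real roots; in particular every eigenvalue of `A`
has multiplicity 1. -/
theorem stmt1 (n : ℕ) (hn : 1 ≤ n) (d : ℕ → ℤ)
    (hd1 : d 1 = 1)
    (hdk : ∀ k : ℕ, 2 ≤ k → d k = 1 + ∏ j ∈ Finset.Icc 1 (k - 1), d j)
    (A : Matrix (Fin (2 * n + 1)) (Fin (2 * n + 1)) ℤ)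
    (hA : ∀ i j : Fin (2 * n + 1), A i j =
      if i = j then d (i.val + 1)
      else if i.val = 0 ∨ j.val = 0 then 1 else 0) :
    ∃ lam : Fin (2 * n + 1) → ℝ, StrictMono lam ∧
      (∀ i : Fin (2 * n + 1),
        ((A.map (Int.cast : ℤ → ℝ)).charpoly).IsRoot (lam i)) ∧
      (∀ x : ℝ, ((A.map (Int.cast : ℤ → ℝ)).charpoly).IsRoot x →
        Polynomial.rootMultiplicity x ((A.map (Int.cast : ℤ → ℝ)).charpoly) = 1) :=
  stmt1_general n d hd1 hdk A hA
end

section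
/- For every real number μ and every nonzero vector v ∈ ℝ^{2n+1} satisfying A·v = μ·v (with A regarded as a real matrix), the family of coordinates (v₁, v₂, …, v_{2n+1}) of v is linearly independent over the field ℚ of rational numbers. -/
/-!
An eigenvector `v` of `A` has `v₀ ≠ 0` and `vᵢ = v₀ / (μ - dᵢ)` for `i ≥ 1`, where
`μ` is a root of the characteristic polynomial `χ = (X - 1) ∏ (X - dᵢ) - ∑ᵢ ∏_{j ≠ i} (X - dⱼ)`.
A `ℚ`-linear relation among the `vᵢ`, multiplied by `∏ (μ - dᵢ) / v₀`, becomes a polynomial of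
degree `< deg χ` vanishing at `μ`; its values at the nodes `dᵢ` force all coefficients to vanish,
provided `χ` is irreducible.

Because `d` is Sylvester's sequence, `χ(0) = ±1`, and `χ` changes sign along
`0 < d₂ < d₃ < ⋯ < d_{2n+1} < ∞`, so all its roots are real and simple, one of them in `(0, 2)`
and all others larger than `2`. In a factorisation `χ = g h` over `ℤ` both `g(0)` and `h(0)` are
units, so each factor has a root of absolute value at most `1`: both would contain the single
small root, which is simple.
-/

open Polynomial Finset Lagrange Function

/-- The characteristic polynomial of the arrowhead matrix with corner entry `a`, diagonal entries
`c i` (`i ∈ s`) and all arm entries equal to `1`. -/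
noncomputable def arrowheadPoly {R ι : Type*} [CommRing R] (s : Finset ι) (a : R) (c : ι → R) :
    R[X] :=
  (X - C a) * nodal s c - derivative (nodal s c)

namespace arrowheadPoly

variable {R ι : Type*} [CommRing R] (s : Finset ι) (a : R) (c : ι → R)

theorem natDegree_derivative_lt [Nontrivial R] :
    (derivative (nodal s c)).natDegree < ((X - C a) * nodal s c).natDegree := by
  rw [(monic_X_sub_C a).natDegree_mul nodal_monic, natDegree_X_sub_C]
  exact (natDegree_derivative_le _).trans_lt (by omega)

theorem monic [Nontrivial R] : (arrowheadPoly s a c).Monic :=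
  ((monic_X_sub_C a).mul nodal_monic).sub_of_left
    (degree_lt_degree (natDegree_derivative_lt s a c))

theorem natDegree [Nontrivial R] : (arrowheadPoly s a c).natDegree = #s + 1 := by
  rw [arrowheadPoly, natDegree_sub_eq_left_of_natDegree_lt (natDegree_derivative_lt s a c),
    (monic_X_sub_C a).natDegree_mul nodal_monic, natDegree_X_sub_C, natDegree_nodal, add_comm]

theorem map {S : Type*} [CommRing S] (f : R →+* S) :
    (arrowheadPoly s a c).map f = arrowheadPoly s (f a) (f ∘ c) := by
  simp [arrowheadPoly, nodal, Polynomial.map_prod, ← derivative_map]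

theorem eval_node [DecidableEq ι] {i : ι} (hi : i ∈ s) :
    (arrowheadPoly s a c).eval (c i) = -(nodal (s.erase i) c).eval (c i) := by
  rw [arrowheadPoly, eval_sub, eval_mul, eval_nodal_at_node hi, mul_zero, zero_sub,
    eval_nodal_derivative_eval_node_eq hi]

theorem fin_univ_eq_range (c : ℕ → R) (N : ℕ) :
    arrowheadPoly (univ : Finset (Fin N)) a (fun i => c i) = arrowheadPoly (range N) a c := by
  simp only [arrowheadPoly, nodal, Fin.prod_univ_eq_prod_range (fun i => X - C (c i)) N]

end arrowheadPoly

theorem mul_eval_nodal_erase {R ι : Type*} [CommRing R] [DecidableEq ι] {s : Finset ι}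
    {c : ι → R} {i : ι} (hi : i ∈ s) {μ w v₀ : R} (h : (μ - c i) * w = v₀) :
    v₀ * (nodal (s.erase i) c).eval μ = w * (nodal s c).eval μ := by
  rw [nodal_eq_mul_nodal_erase hi, eval_mul, eval_sub, eval_X, eval_C, ← h]
  ring

theorem aeval_nodal {K L ι : Type*} [Field K] [Field L] [Algebra K L] (s : Finset ι) (c : ι → K)
    (μ : L) : aeval μ (nodal s c) = (nodal s (algebraMap K L ∘ c)).eval μ := by
  simp [nodal, eval_prod]

section Field

variable {K ι : Type*} [Field K] [Fintype ι]

theorem eq_zero_of_mul_sub_eq_zero {c : ι → K} (hc : Injective c) {μ : K} {w : ι → K}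
    (hw : ∀ i, (μ - c i) * w i = 0) (hsum : ∑ i, w i = 0) : w = 0 := by
  by_contra h
  obtain ⟨i, hi⟩ := Function.ne_iff.mp h
  have hμ : μ = c i := sub_eq_zero.mp ((mul_eq_zero.mp (hw i)).resolve_right hi)
  have hj : ∀ j ≠ i, w j = 0 := fun j hji =>
    (mul_eq_zero.mp (hw j)).resolve_left (sub_ne_zero.mpr (hμ ▸ hc.ne hji.symm))
  exact hi (by rwa [sum_eq_single i (fun j _ => hj j) (by simp)] at hsum)

theorem eval_arrowheadPoly_eq_zero [DecidableEq ι] {c : ι → K} {a μ v₀ : K} {w : ι → K}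
    (hv₀ : v₀ ≠ 0) (hw : ∀ i, (μ - c i) * w i = v₀) (hsum : (μ - a) * v₀ = ∑ i, w i) :
    (arrowheadPoly univ a c).eval μ = 0 := by
  refine (mul_eq_zero.mp ?_).resolve_left hv₀
  simp only [arrowheadPoly, derivative_nodal, eval_sub, eval_mul, eval_X, eval_C, eval_finsetSum,
    mul_sub, mul_sum, fun i => mul_eval_nodal_erase (mem_univ i) (hw i), ← sum_mul, ← hsum]
  ring

theorem eq_zero_of_C_mul_nodal_add_sum_eq_zero [DecidableEq ι] {c : ι → K} (hc : Injective c)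
    {a : K} {b : ι → K} (h : C a * nodal univ c + ∑ i, C (b i) * nodal (univ.erase i) c = 0) :
    a = 0 ∧ b = 0 := by
  have hb : b = 0 := by
    ext i
    have := congrArg (Polynomial.eval (c i)) h
    rw [eval_add, eval_mul, eval_nodal_at_node (mem_univ i), mul_zero, zero_add, eval_finsetSum,
      sum_eq_single i (fun j _ hji => by
        rw [eval_mul, eval_nodal_at_node (mem_erase.2 ⟨hji.symm, mem_univ i⟩), mul_zero])
        (by simp), eval_mul, eval_C, eval_zero] at this
    exact (mul_eq_zero.mp this).resolve_right
      (eval_nodal_not_at_node fun j hj => hc.ne (ne_of_mem_erase hj).symm)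
  subst hb
  simpa [nodal_ne_zero] using h

end Field

theorem linearIndependent_of_mul_sub_eq {K L : Type*} [Field K] [Field L] [Algebra K L] {N : ℕ}
    {c : Fin N → K} (hc : Injective c) {μ : L} (hμ : N < (minpoly K μ).natDegree)
    {v : Fin (N + 1) → L} (hv₀ : v 0 ≠ 0)
    (hv : ∀ i, (μ - algebraMap K L (c i)) * v i.succ = v 0) : LinearIndependent K v := by
  rw [Fintype.linearIndependent_iff]
  intro g hg
  set G := C (g 0) * nodal univ c + ∑ i, C (g i.succ) * nodal (univ.erase i) c
  have hG : aeval μ G = 0 := by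
    refine (mul_eq_zero.mp ?_).resolve_left hv₀
    have key i := mul_eval_nodal_erase (s := univ) (c := algebraMap K L ∘ c) (mem_univ i) (hv i)
    calc v 0 * aeval μ G = (∑ j, g j • v j) * (nodal univ (algebraMap K L ∘ c)).eval μ := by
          simp only [G, map_add, map_mul, map_sum, aeval_C, aeval_nodal, Fin.sum_univ_succ,
            Algebra.smul_def, mul_add, add_mul, mul_sum, sum_mul, mul_left_comm (v 0), key]
          simp only [mul_assoc]
      _ = 0 := by rw [hg, zero_mul]
  have hGdeg : G.natDegree ≤ N := by
    refine natDegree_add_le_of_degree_le ?_ (natDegree_sum_le_of_forall_le _ _ fun i _ => ?_)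
    · exact natDegree_C_mul_le _ _ |>.trans (by simp)
    · exact natDegree_C_mul_le _ _ |>.trans (by simp)
  have hG0 : G = 0 := by
    by_contra hne
    have := natDegree_le_natDegree (minpoly.degree_le_of_ne_zero K μ hne hG)
    omega
  obtain ⟨h0, hs⟩ := eq_zero_of_C_mul_nodal_add_sum_eq_zero hc hG0
  intro j
  cases j using Fin.cases with
  | zero => exact h0
  | succ i => exact congrFun hs i

theorem exists_mem_Ioo_isRoot_of_mul_neg {f : ℝ[X]} {a b : ℝ} (hab : a < b)
    (h : f.eval a * f.eval b < 0) : ∃ r ∈ Set.Ioo a b, f.IsRoot r := by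
  have hcont := f.continuous.continuousOn (s := Set.Icc a b)
  rcases mul_neg_iff.mp h with ⟨ha, hb⟩ | ⟨ha, hb⟩
  · exact intermediate_value_Ioo' hab.le hcont ⟨hb, ha⟩
  · exact intermediate_value_Ioo hab.le hcont ⟨ha, hb⟩

theorem exists_roots_eq_map_range_of_sign_changes {f : ℝ[X]} {m : ℕ} (hdeg : f.natDegree ≤ m)
    {x : ℕ → ℝ} (hx : ∀ k < m, x k < x (k + 1))
    (hsign : ∀ k ≤ m, 0 < (-1) ^ (m - k) * f.eval (x k)) :
    ∃ r : ℕ → ℝ, f.roots = (Multiset.range m).map r ∧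
      ∀ k < m, r k ∈ Set.Ioo (x k) (x (k + 1)) := by
  have hchange : ∀ k < m, f.eval (x k) * f.eval (x (k + 1)) < 0 := by
    intro k hk
    have h₁ := hsign k hk.le
    have h₂ := hsign (k + 1) hk
    rw [show m - k = m - (k + 1) + 1 by omega, pow_succ] at h₁
    rcases neg_one_pow_eq_or ℝ (m - (k + 1)) with h | h <;> rw [h] at h₁ h₂ <;> nlinarith
  choose! r hr hroot using fun k hk => exists_mem_Ioo_isRoot_of_mul_neg (hx k hk) (hchange k hk)
  refine ⟨r, ?_, hr⟩
  rcases m.eq_zero_or_pos with rfl | hm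
  · rw [eq_C_of_natDegree_le_zero hdeg, roots_C]; rfl
  have hf : f ≠ 0 := fun h => by simpa [h] using hchange 0 hm
  have hchain : ∀ k l, k < l → l < m → x (k + 1) ≤ x l := by
    intro k l hkl hlm
    induction l, hkl using Nat.le_induction with
    | base => rfl
    | succ l _ ih => exact (ih (by omega)).trans (hx l (by omega)).le
  have hinj : Set.InjOn r (Set.Iio m) := by
    intro k hk l hl hkl
    by_contra hne
    rcases Nat.lt_or_gt_of_ne hne with h | h
    · exact (hr k hk).2.trans_le (hchain k l h hl) |>.trans (hr l hl).1 |>.ne hkl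
    · exact (hr l hl).2.trans_le (hchain l k h hk) |>.trans (hr k hk).1 |>.ne hkl.symm
  refine (Multiset.eq_of_le_of_card_le ?_ ?_).symm
  · rw [Multiset.le_iff_subset]
    · intro y hy
      obtain ⟨k, hk, rfl⟩ := Multiset.mem_map.mp hy
      exact (mem_roots hf).mpr (hroot k (Multiset.mem_range.mp hk))
    · exact (Multiset.nodup_range m).map_on fun k hk l hl =>
        hinj (Multiset.mem_range.mp hk) (Multiset.mem_range.mp hl)
  · simpa using (card_roots' f).trans hdeg

theorem exists_eval_pos_of_monic {f : ℝ[X]} (hf : f.Monic) (hdeg : 0 < f.natDegree) (a : ℝ) :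
    ∃ b, a < b ∧ 0 < f.eval b := by
  have htend := tendsto_atTop_of_leadingCoeff_nonneg f
    (natDegree_pos_iff_degree_pos.mp hdeg) (by simp [hf.leadingCoeff])
  obtain ⟨b, hb1, hb2⟩ := ((htend.eventually_gt_atTop 0).and (Filter.eventually_gt_atTop a)).exists
  exact ⟨b, hb2, hb1⟩

theorem exists_mem_roots_abs_le_one {g : ℤ[X]} (hg : g.Monic) (hdeg : g.natDegree ≠ 0)
    (h0 : IsUnit (g.coeff 0)) (hsplit : (g.map (Int.castRingHom ℝ)).Splits) :
    ∃ r ∈ (g.map (Int.castRingHom ℝ)).roots, |r| ≤ 1 := by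
  set q := g.map (Int.castRingHom ℝ)
  by_contra! hbig
  have hprod : |q.roots.prod| = 1 := by
    have := hsplit.coeff_zero_eq_prod_roots_of_monic (hg.map _)
    rw [coeff_map, eq_intCast] at this
    have h1 : |(g.coeff 0 : ℝ)| = 1 := by exact_mod_cast Int.isUnit_iff_abs_eq.mp h0
    rwa [this, abs_mul, abs_pow, abs_neg, abs_one, one_pow, one_mul] at h1
  have hne : q.roots ≠ 0 := by
    rw [← Multiset.card_pos, ← hsplit.natDegree_eq_card_roots, hg.natDegree_map]
    exact Nat.pos_of_ne_zero hdeg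
  obtain ⟨r, hr⟩ := Multiset.exists_mem_of_ne_zero hne
  obtain ⟨t, ht⟩ := Multiset.exists_cons_of_mem hr
  have ht1 : 1 ≤ |t.prod| := by
    rw [show |t.prod| = (t.map abs).prod from map_multiset_prod (absHom : ℝ →*₀ ℝ) t]
    exact Multiset.one_le_prod fun a ha => by
      obtain ⟨b, hb, rfl⟩ := Multiset.mem_map.mp ha
      exact (hbig b (ht ▸ Multiset.mem_cons_of_mem hb)).le
  rw [ht, Multiset.prod_cons, abs_mul] at hprod
  nlinarith [hbig r hr]

theorem irreducible_of_card_roots_abs_le_one {p : ℤ[X]} (hp : p.Monic) (hdeg : p.natDegree ≠ 0)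
    (h0 : IsUnit (p.coeff 0)) (hsplit : (p.map (Int.castRingHom ℝ)).Splits)
    (hsmall : ((p.map (Int.castRingHom ℝ)).roots.filter (|·| ≤ 1)).card ≤ 1) : Irreducible p := by
  refine hp.irreducible_iff_natDegree.mpr ⟨fun h => hdeg (by simp [h]), fun f g hf hg hfg => ?_⟩
  by_contra! hfg0
  have hq : p.map (Int.castRingHom ℝ) ≠ 0 := (hp.map _).ne_zero
  have exists_small_root : ∀ h : ℤ[X], h.Monic → h.natDegree ≠ 0 → h ∣ p →
      0 < ((h.map (Int.castRingHom ℝ)).roots.filter (|·| ≤ 1)).card := by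
    intro h hh hdeg hdvd
    have hunit : IsUnit (h.coeff 0) := by
      obtain ⟨k, rfl⟩ := hdvd
      exact isUnit_of_mul_isUnit_left (by rwa [← mul_coeff_zero])
    obtain ⟨r, hr, hr1⟩ := exists_mem_roots_abs_le_one hh hdeg hunit
      (hsplit.of_dvd hq (Polynomial.map_dvd _ hdvd))
    exact Multiset.card_pos_iff_exists_mem.mpr ⟨r, Multiset.mem_filter.mpr ⟨hr, hr1⟩⟩
  have hf := exists_small_root f hf hfg0.1 ⟨g, hfg.symm⟩
  have hg := exists_small_root g hg hfg0.2 ⟨f, by rw [← hfg, mul_comm]⟩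
  rw [← hfg, Polynomial.map_mul, roots_mul (by rwa [← Polynomial.map_mul, hfg]),
    Multiset.filter_add, Multiset.card_add] at hsmall
  omega

namespace Sylvester

-- Sylvester's sequence `2, 3, 7, 43, …`; in the theorem it is `k ↦ d (k + 2)`.
variable {c : ℕ → ℤ} (hc : ∀ N, c N = 1 + ∏ k ∈ range N, c k)
include hc

theorem two_le (N : ℕ) : 2 ≤ c N := by
  induction N using Nat.strong_induction_on with
  | _ N ih =>
    have : 1 ≤ ∏ k ∈ range N, c k :=
      one_le_prod fun k hk => by linarith [ih k (mem_range.mp hk)]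
    rw [hc N]
    omega

theorem prod_range_eq_sub_one (N : ℕ) : ∏ k ∈ range N, c k = c N - 1 := by
  rw [hc N]; ring

theorem succ_sub_one (N : ℕ) : c (N + 1) - 1 = (c N - 1) * c N := by
  rw [← prod_range_eq_sub_one hc, ← prod_range_eq_sub_one hc, prod_range_succ]

theorem strictMono : StrictMono c :=
  strictMono_nat_of_lt_succ fun N => by nlinarith [succ_sub_one hc N, two_le hc N]

theorem eval_zero_nodal (N : ℕ) : (nodal (range N) c).eval 0 = (-1) ^ N * (c N - 1) := by
  simp_rw [eval_nodal, zero_sub, prod_neg, card_range, prod_range_eq_sub_one hc]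

theorem eval_zero_nodal_add_derivative (N : ℕ) :
    (nodal (range N) c + derivative (nodal (range N) c)).eval 0 = (-1) ^ N := by
  induction N with
  | zero => simp
  | succ N ih =>
    rw [range_add_one, nodal_insert_eq_nodal notMem_range_self]
    have h := eval_zero_nodal hc N
    simp only [eval_add, derivative_mul, eval_mul, eval_sub, eval_X, eval_C, derivative_sub,
      derivative_X, derivative_C, sub_zero, one_mul] at ih ⊢
    linear_combination (-c N) * ih + h

theorem eval_zero_arrowheadPoly (N : ℕ) : (arrowheadPoly (range N) 1 c).eval 0 = -(-1) ^ N := by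
  rw [← eval_zero_nodal_add_derivative hc N, arrowheadPoly]
  simp only [eval_sub, eval_mul, eval_X, eval_C, eval_add]
  ring

theorem neg_one_pow_mul_eval_node_pos {N i : ℕ} (hi : i < N) :
    0 < (-1) ^ (N - i) * (arrowheadPoly (range N) 1 c).eval (c i) := by
  have hsplit : (range N).erase i = range i ∪ Ioo i N := by
    ext j; simp only [mem_erase, mem_range, mem_union, mem_Ioo]; omega
  have hdisj : Disjoint (range i) (Ioo i N) :=
    disjoint_left.mpr fun j hj hj' => by simp only [mem_range, mem_Ioo] at hj hj'; omega
  have hlow : 0 < ∏ j ∈ range i, (c i - c j) :=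
    prod_pos fun j hj => sub_pos.mpr (strictMono hc (mem_range.mp hj))
  have hhigh : 0 < ∏ j ∈ Ioo i N, (c j - c i) :=
    prod_pos fun j hj => sub_pos.mpr (strictMono hc (mem_Ioo.mp hj).1)
  obtain ⟨t, ht, hNi⟩ : ∃ t, N - i - 1 = t ∧ N - i = t + 1 := ⟨_, rfl, by omega⟩
  have hflip : ∏ j ∈ Ioo i N, (c i - c j) = (-1) ^ t * ∏ j ∈ Ioo i N, (c j - c i) := by
    rw [← ht, ← Nat.card_Ioo, ← prod_neg]
    exact prod_congr rfl fun _ _ => (neg_sub _ _).symm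
  have hsq : ((-1 : ℤ) ^ t) ^ 2 = 1 := by rw [← pow_mul, mul_comm, pow_mul, neg_one_sq, one_pow]
  rw [arrowheadPoly.eval_node _ _ _ (mem_range.mpr hi), eval_nodal, hsplit, prod_union hdisj,
    hflip, hNi]
  set L := ∏ j ∈ range i, (c i - c j)
  set H := ∏ j ∈ Ioo i N, (c j - c i)
  rw [show (-1) ^ (t + 1) * -(L * ((-1) ^ t * H)) = L * H by linear_combination L * H * hsq]
  exact mul_pos hlow hhigh

theorem neg_one_pow_mul_eval_zero_pos (N : ℕ) :
    0 < (-1) ^ (N + 1) * (arrowheadPoly (range N) 1 c).eval 0 := by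
  rw [eval_zero_arrowheadPoly hc, show (-1 : ℤ) ^ (N + 1) * -(-1) ^ N = (-1) ^ (N + N) by ring,
    Even.neg_one_pow ⟨N, rfl⟩]
  exact one_pos

theorem exists_alternating_points (N : ℕ) :
    ∃ x : ℕ → ℝ, (∀ k, 2 ≤ x (k + 1)) ∧ (∀ k < N + 1, x k < x (k + 1)) ∧
      ∀ k ≤ N + 1, 0 < (-1) ^ (N + 1 - k) *
        ((arrowheadPoly (range N) 1 c).map (Int.castRingHom ℝ)).eval (x k) := by
  set p := arrowheadPoly (range N) 1 c
  have hp : p.Monic := arrowheadPoly.monic _ _ _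
  obtain ⟨M, hM, hpM⟩ := exists_eval_pos_of_monic (hp.map (Int.castRingHom ℝ))
    (by rw [hp.natDegree_map, arrowheadPoly.natDegree]; omega) (c N)
  have hcN : (2 : ℝ) ≤ c N := by exact_mod_cast two_le hc N
  let x : ℕ → ℝ := fun | 0 => 0 | k + 1 => if k < N then (c k : ℝ) else M
  have hx2 (k : ℕ) : 2 ≤ x (k + 1) := by
    dsimp only [x]
    split_ifs
    · exact_mod_cast two_le hc k
    · linarith
  refine ⟨x, hx2, fun k hk => ?_, fun k hk => ?_⟩
  · cases k with
    | zero => exact two_pos.trans_le (hx2 0)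
    | succ k =>
      dsimp only [x]
      rw [if_pos (by omega)]
      split_ifs
      · exact_mod_cast strictMono hc k.lt_succ_self
      · exact lt_trans (by exact_mod_cast strictMono hc (by omega)) hM
  · cases k with
    | zero =>
      rw [show x 0 = ((0 : ℤ) : ℝ) from Int.cast_zero.symm, eval_intCast_map, eq_intCast]
      exact_mod_cast neg_one_pow_mul_eval_zero_pos hc N
    | succ k =>
      dsimp only [x]
      split_ifs with hkN
      · rw [eval_intCast_map, eq_intCast, show N + 1 - (k + 1) = N - k by omega]
        exact_mod_cast neg_one_pow_mul_eval_node_pos hc hkN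
      · rwa [show N + 1 - (k + 1) = 0 by omega, pow_zero, one_mul]

theorem irreducible_arrowheadPoly (N : ℕ) : Irreducible (arrowheadPoly (range N) 1 c) := by
  set p := arrowheadPoly (range N) 1 c
  have hp : p.Monic := arrowheadPoly.monic _ _ _
  have hdeg : (p.map (Int.castRingHom ℝ)).natDegree = N + 1 := by
    rw [hp.natDegree_map, arrowheadPoly.natDegree, card_range]
  obtain ⟨x, hx2, hx, hsign⟩ := exists_alternating_points hc N
  obtain ⟨r, hroots, hr⟩ := exists_roots_eq_map_range_of_sign_changes hdeg.le hx hsign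
  refine irreducible_of_card_roots_abs_le_one hp (by simp [p, arrowheadPoly.natDegree]) ?_ ?_ ?_
  · rw [coeff_zero_eq_eval_zero, eval_zero_arrowheadPoly hc]
    exact (isUnit_neg_one.pow N).neg
  · rw [splits_iff_card_roots, hroots, Multiset.card_map, Multiset.card_range, hdeg]
  · rw [hroots, Multiset.filter_map, Multiset.card_map]
    refine (Multiset.card_le_card ((Multiset.le_iff_subset ((Multiset.nodup_range _).filter _)).mpr
      fun k hk => ?_)).trans (Multiset.card_range 1).le
    obtain ⟨hk, habs⟩ := Multiset.mem_filter.mp hk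
    rw [Multiset.mem_range] at hk ⊢
    by_contra hk1
    obtain ⟨j, rfl⟩ : ∃ j, k = j + 1 := ⟨k - 1, by omega⟩
    have habs' : |r (j + 1)| ≤ 1 := habs
    linarith [(hr _ hk).1, hx2 j, (abs_le.mp habs').2]

theorem natDegree_minpoly {μ : ℝ} {N : ℕ} (hμ : aeval μ (arrowheadPoly (range N) 1 c) = 0) :
    (minpoly ℚ μ).natDegree = N + 1 := by
  have hp := arrowheadPoly.monic (range N) (1 : ℤ) c
  have hirr : Irreducible ((arrowheadPoly (range N) 1 c).map (Int.castRingHom ℚ)) :=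
    (IsPrimitive.Int.irreducible_iff_irreducible_map_cast hp.isPrimitive).mp
      (irreducible_arrowheadPoly hc N)
  rw [← minpoly.eq_of_irreducible_of_monic hirr
    (by rwa [← algebraMap_int_eq, aeval_map_algebraMap]) (hp.map _), hp.natDegree_map,
    arrowheadPoly.natDegree, card_range]

end Sylvester

theorem sylvester_shift {d : ℕ → ℤ} (hd1 : d 1 = 1)
    (hdk : ∀ k : ℕ, 2 ≤ k → d k = 1 + ∏ j ∈ Icc 1 (k - 1), d j) (N : ℕ) :
    d (N + 2) = 1 + ∏ k ∈ range N, d (k + 2) := by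
  rw [hdk (N + 2) (by omega), show N + 2 - 1 = N + 1 by omega, ← Ico_add_one_right_eq_Icc,
    prod_Ico_eq_prod_range, Nat.add_sub_cancel, prod_range_succ']
  simp only [hd1, mul_one, add_comm 1, add_assoc, one_add_one_eq_two]

theorem arrowhead_eigen_equations {N : ℕ} {d : ℕ → ℤ} {A : Matrix (Fin (N + 1)) (Fin (N + 1)) ℤ}
    (hA : ∀ i j : Fin (N + 1), A i j =
      if i = j then d (i.val + 1) else if i.val = 0 ∨ j.val = 0 then 1 else 0)
    {μ : ℝ} {v : Fin (N + 1) → ℝ} (hAv : (A.map (Int.cast : ℤ → ℝ)).mulVec v = μ • v) :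
    (μ - d 1) * v 0 = ∑ i : Fin N, v i.succ ∧ ∀ i : Fin N, (μ - d (i + 2)) * v i.succ = v 0 := by
  constructor
  · have h : (d 1 : ℝ) * v 0 + ∑ i : Fin N, v i.succ = μ * v 0 := by
      simpa [Matrix.mulVec, dotProduct, Fin.sum_univ_succ, hA, (Fin.succ_ne_zero _).symm]
        using congrFun hAv 0
    linear_combination -h
  · intro i
    have h : v 0 + d (i + 2) * v i.succ = μ * v i.succ := by
      simpa [Matrix.mulVec, dotProduct, Fin.sum_univ_succ, hA, add_assoc] using congrFun hAv i.succ
    linear_combination -h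

theorem stmt3_general (n : ℕ) (d : ℕ → ℤ)
    (hd1 : d 1 = 1)
    (hdk : ∀ k : ℕ, 2 ≤ k → d k = 1 + ∏ j ∈ Finset.Icc 1 (k - 1), d j)
    (A : Matrix (Fin (2 * n + 1)) (Fin (2 * n + 1)) ℤ)
    (hA : ∀ i j : Fin (2 * n + 1), A i j =
      if i = j then d (i.val + 1)
      else if i.val = 0 ∨ j.val = 0 then 1 else 0) :
    ∀ (mu : ℝ) (v : Fin (2 * n + 1) → ℝ), v ≠ 0 →
      (A.map (Int.cast : ℤ → ℝ)).mulVec v = mu • v →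
      LinearIndependent ℚ v := by
  intro μ v hv hAv
  have hc := sylvester_shift hd1 hdk
  have hinj {R : Type} [Ring R] [CharZero R] : Injective fun i : Fin (2 * n) => (d (i + 2) : R) :=
    Int.cast_injective.comp <| (Sylvester.strictMono (c := fun k => d (k + 2)) hc).injective.comp
      Fin.val_injective
  obtain ⟨h0, hs⟩ := arrowhead_eigen_equations hA hAv
  have hv₀ : v 0 ≠ 0 := by
    intro hv₀
    have htail := eq_zero_of_mul_sub_eq_zero hinj (w := fun i => v i.succ)
      (fun i => by rw [hs i, hv₀]) (by rw [← h0, hv₀, mul_zero])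
    exact hv (funext fun j => Fin.cases hv₀ (congrFun htail) j)
  have hroot : aeval μ (arrowheadPoly (range (2 * n)) 1 fun k => d (k + 2)) = 0 := by
    rw [aeval_def, eval₂_eq_eval_map, arrowheadPoly.map, map_one, ← arrowheadPoly.fin_univ_eq_range]
    exact eval_arrowheadPoly_eq_zero hv₀ hs (by simpa [hd1] using h0)
  refine linearIndependent_of_mul_sub_eq hinj ?_ hv₀ fun i => by simpa using hs i
  rw [Sylvester.natDegree_minpoly (c := fun k => d (k + 2)) hc hroot]
  omega

/-- The coordinates of any eigenvector of the arrowhead matrix `A` (over `ℝ`) are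
linearly independent over `ℚ`. -/
theorem stmt3 (n : ℕ) (hn : 1 ≤ n) (d : ℕ → ℤ)
    (hd1 : d 1 = 1)
    (hdk : ∀ k : ℕ, 2 ≤ k → d k = 1 + ∏ j ∈ Finset.Icc 1 (k - 1), d j)
    (A : Matrix (Fin (2 * n + 1)) (Fin (2 * n + 1)) ℤ)
    (hA : ∀ i j : Fin (2 * n + 1), A i j =
      if i = j then d (i.val + 1)
      else if i.val = 0 ∨ j.val = 0 then 1 else 0) :
    ∀ (mu : ℝ) (v : Fin (2 * n + 1) → ℝ), v ≠ 0 →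
      (A.map (Int.cast : ℤ → ℝ)).mulVec v = mu • v →
      LinearIndependent ℚ v :=
  stmt3_general n d hd1 hdk A hA
end

section
/- For every (z₁, z₂) ∈ ℂ² with (z₁, z₂) ≠ (0, 0), there exists a unique real number φ such that |z₁|² · |a|^(−2φ) + |z₂|² · |b|^(−2φ) = 1. -/
/-!
The left-hand side is a continuous function of `φ` that is strictly decreasing (each nonzero
coefficient multiplies a strictly decreasing exponential, the other term is nonincreasing),
tends to `+∞` as `φ → -∞` and to `0` as `φ → +∞`. By the intermediate value theorem it takes
the value `1`, and strict monotonicity makes the solution unique.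
-/

open Filter Topology

theorem existsUnique_eq_of_strictAnti_of_tendsto {X α : Type*} [TopologicalSpace X]
    [LinearOrder X] [PreconnectedSpace X] [LinearOrder α] [TopologicalSpace α]
    [OrderTopology α] [(atBot : Filter X).NeBot] [(atTop : Filter X).NeBot] {f : X → α} {l y : α}
    (hf : StrictAnti f) (hcont : Continuous f) (hbot : Tendsto f atBot atTop)
    (htop : Tendsto f atTop (𝓝 l)) (hy : l < y) :
    ∃! x, f x = y := by
  have hlow : ∃ a, f a ≤ y := (htop.eventually (ge_mem_nhds hy)).exists
  have hhigh : ∃ b, y ≤ f b := (hbot.eventually_ge_atTop y).exists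
  obtain ⟨x, hx⟩ := mem_range_of_exists_le_of_exists_ge hcont hlow hhigh
  exact ⟨x, hx, fun x' hx' => hf.injective (hx'.trans hx.symm)⟩

section rpow

variable {A : ℝ}

theorem strictAnti_rpow_neg_two_mul (hA : 1 < A) : StrictAnti fun φ : ℝ => A ^ (-(2 * φ)) :=
  (Real.strictMono_rpow_of_base_gt_one hA).comp_strictAnti fun _ _ h => by linarith

theorem tendsto_rpow_neg_two_mul_atBot (hA : 1 < A) :
    Tendsto (fun φ : ℝ => A ^ (-(2 * φ))) atBot atTop :=
  (tendsto_rpow_atTop_of_base_gt_one A hA).comp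
    (tendsto_neg_atBot_atTop.comp (tendsto_id.const_mul_atBot two_pos))

theorem tendsto_rpow_neg_two_mul_atTop (hA : 1 < A) :
    Tendsto (fun φ : ℝ => A ^ (-(2 * φ))) atTop (𝓝 0) :=
  (tendsto_rpow_atBot_of_base_gt_one A hA).comp
    (tendsto_neg_atTop_atBot.comp (tendsto_id.const_mul_atTop two_pos))

end rpow

theorem existsUnique_mul_rpow_add_mul_rpow_eq {A B c₁ c₂ y : ℝ} (hA : 1 < A) (hB : 1 < B)
    (hc₁ : 0 < c₁) (hc₂ : 0 ≤ c₂) (hy : 0 < y) :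
    ∃! φ : ℝ, c₁ * A ^ (-(2 * φ)) + c₂ * B ^ (-(2 * φ)) = y := by
  have hanti : StrictAnti fun φ : ℝ => c₁ * A ^ (-(2 * φ)) + c₂ * B ^ (-(2 * φ)) :=
    ((strictAnti_rpow_neg_two_mul hA).const_mul hc₁).add_antitone
      ((strictAnti_rpow_neg_two_mul hB).antitone.const_mul hc₂)
  have hcont : Continuous fun φ : ℝ => c₁ * A ^ (-(2 * φ)) + c₂ * B ^ (-(2 * φ)) := by
    have : A ≠ 0 := by positivity
    have : B ≠ 0 := by positivity
    fun_prop (disch := assumption)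
  have hbot : Tendsto (fun φ : ℝ => c₁ * A ^ (-(2 * φ)) + c₂ * B ^ (-(2 * φ))) atBot atTop :=
    ((tendsto_rpow_neg_two_mul_atBot hA).const_mul_atTop hc₁).atTop_add_nonneg
      fun φ => mul_nonneg hc₂ (Real.rpow_nonneg (by positivity) (-(2 * φ)))
  have htop := ((tendsto_rpow_neg_two_mul_atTop hA).const_mul c₁).add
    ((tendsto_rpow_neg_two_mul_atTop hB).const_mul c₂)
  rw [mul_zero, mul_zero, add_zero] at htop
  exact existsUnique_eq_of_strictAnti_of_tendsto hanti hcont hbot htop hy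

/-- For every `(z₁, z₂) ≠ (0,0)` in `ℂ²` there is a unique real `φ` with
`|z₁|² |a|^(-2φ) + |z₂|² |b|^(-2φ) = 1`. -/
theorem stmt4 (a b : ℂ) (ha : 1 < ‖a‖) (hb : 1 < ‖b‖)
    (z : ℂ × ℂ) (hz : z ≠ 0) :
    ∃! φ : ℝ,
      ‖z.1‖ ^ 2 * ‖a‖ ^ (-(2 * φ)) +
        ‖z.2‖ ^ 2 * ‖b‖ ^ (-(2 * φ)) = 1 := by
  rcases eq_or_ne z.1 0 with h₁ | h₁
  · have h₂ : z.2 ≠ 0 := fun h₂ => hz (Prod.ext h₁ h₂)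
    simp_rw [add_comm (‖z.1‖ ^ 2 * _)]
    exact existsUnique_mul_rpow_add_mul_rpow_eq hb ha (by positivity) (by positivity) one_pos
  · exact existsUnique_mul_rpow_add_mul_rpow_eq ha hb (by positivity) (by positivity) one_pos
end

section
/- Let (z₁, z₂) ∈ ℂ² with (z₁, z₂) ≠ (0, 0). If φ ∈ ℝ satisfies |z₁|² · |a|^(−2φ) + |z₂|² · |b|^(−2φ) = 1 and φ' ∈ ℝ satisfies |a·z₁|² · |a|^(−2φ') + |b·z₂|² · |b|^(−2φ') = 1, then φ' = φ + 1. -/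
/-!
Since `‖a z₁‖² ‖a‖^(-2φ') = ‖z₁‖² ‖a‖^(-2(φ'-1))`
(and likewise for `b`), `φ' - 1` solves the equation for `(z₁, z₂)`. The left-hand side
`t ↦ ‖z₁‖² ‖a‖^(-2t) + ‖z₂‖² ‖b‖^(-2t)` is strictly decreasing because `‖a‖, ‖b‖ > 1` and the weights,
summing to `1` at `t = φ`, are not both zero, so that
equation has at most one solution, and `φ' - 1 = φ`.
-/

open Real

lemma strictAnti_mul_rpow_neg_add {A B x y : ℝ} (hA : 1 < A) (hB : 1 < B)
    (hx : 0 ≤ x) (hy : 0 ≤ y) (hxy : 0 < x + y) :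
    StrictAnti fun t : ℝ => x * A ^ (-t) + y * B ^ (-t) := by
  intro s t hst
  have hAst : A ^ (-t) < A ^ (-s) := rpow_lt_rpow_of_exponent_lt hA (neg_lt_neg hst)
  have hBst : B ^ (-t) < B ^ (-s) := rpow_lt_rpow_of_exponent_lt hB (neg_lt_neg hst)
  rcases hx.lt_or_eq with hx | rfl
  · nlinarith [mul_le_mul_of_nonneg_left hBst.le hy]
  · simp only [zero_add] at hxy ⊢
    nlinarith

lemma sq_mul_mul_rpow_neg {A : ℝ} (hA : 0 < A) (w t : ℝ) :
    (A * w) ^ 2 * A ^ (-t) = w ^ 2 * A ^ (-(t - 2)) := by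
  rw [neg_sub, rpow_sub hA, rpow_neg hA.le, rpow_two]
  field_simp

theorem stmt5_general (a b : ℂ) (ha : 1 < ‖a‖) (hb : 1 < ‖b‖)
    (z : ℂ × ℂ) (φ φ' : ℝ)
    (hφ : ‖z.1‖ ^ 2 * ‖a‖ ^ (-(2 * φ)) +
      ‖z.2‖ ^ 2 * ‖b‖ ^ (-(2 * φ)) = 1)
    (hφ' : ‖a * z.1‖ ^ 2 * ‖a‖ ^ (-(2 * φ')) +
      ‖b * z.2‖ ^ 2 * ‖b‖ ^ (-(2 * φ')) = 1) :
    φ' = φ + 1 := by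
  have hweights : 0 < ‖z.1‖ ^ 2 + ‖z.2‖ ^ 2 := by
    by_contra! h
    have h₁ : ‖z.1‖ ^ 2 = 0 := by nlinarith [sq_nonneg ‖z.1‖, sq_nonneg ‖z.2‖]
    have h₂ : ‖z.2‖ ^ 2 = 0 := by nlinarith [sq_nonneg ‖z.1‖, sq_nonneg ‖z.2‖]
    simp [h₁, h₂] at hφ
  rw [norm_mul, norm_mul, sq_mul_mul_rpow_neg (by linarith) _ _,
    sq_mul_mul_rpow_neg (by linarith) _ _, ← hφ] at hφ'
  have hshift := (strictAnti_mul_rpow_neg_add ha hb (sq_nonneg _) (sq_nonneg _) hweights).injective hφ'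
  linarith

/-- If `φ` solves the defining equation for `(z₁, z₂)` and `φ'` solves it for
`(a z₁, b z₂)`, then `φ' = φ + 1`. -/
theorem stmt5 (a b : ℂ) (ha : 1 < ‖a‖) (hb : 1 < ‖b‖)
    (z : ℂ × ℂ) (hz : z ≠ 0) (φ φ' : ℝ)
    (hφ : ‖z.1‖ ^ 2 * ‖a‖ ^ (-(2 * φ)) +
      ‖z.2‖ ^ 2 * ‖b‖ ^ (-(2 * φ)) = 1)
    (hφ' : ‖a * z.1‖ ^ 2 * ‖a‖ ^ (-(2 * φ')) +
      ‖b * z.2‖ ^ 2 * ‖b‖ ^ (-(2 * φ')) = 1) :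
    φ' = φ + 1 :=
  stmt5_general a b ha hb z φ φ' hφ hφ'
end

section
/- There exists a function φ : ℂ × ℂ → ℝ which is infinitely differentiable (C^∞, in the sense of ContDiffOn over ℝ) on the open set { (z₁, z₂) ∈ ℂ² : (z₁, z₂) ≠ (0, 0) } and satisfies |z₁|² · |a|^(−2·φ(z₁,z₂)) + |z₂|² · |b|^(−2·φ(z₁,z₂)) = 1 for every (z₁, z₂) ≠ (0, 0). -/
open Filter Topology

namespace Stmt6Aux

/-- The auxiliary function. -/
noncomputable def G (r s : ℝ) (p : ℂ × ℂ) (t : ℝ) : ℝ :=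
  ‖p.1‖ ^ 2 * Real.exp (t * (-2 * Real.log r)) + ‖p.2‖ ^ 2 * Real.exp (t * (-2 * Real.log s))

lemma norm_pos_or (p : ℂ × ℂ) (hp : p ≠ 0) : 0 < ‖p.1‖ ∨ 0 < ‖p.2‖ := by
  rcases eq_or_ne p.1 0 with h1 | h1
  · right
    refine norm_pos_iff.2 fun h2 => hp ?_
    exact Prod.ext h1 h2
  · left; exact norm_pos_iff.2 h1

lemma G_strictAnti {r s : ℝ} (hr : 1 < r) (hs : 1 < s) {p : ℂ × ℂ} (hp : p ≠ 0) :
    StrictAnti (G r s p) := by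
  have hlr : 0 < Real.log r := Real.log_pos hr
  have hls : 0 < Real.log s := Real.log_pos hs
  intro t t' htt
  have h1 : Real.exp (t' * (-2 * Real.log r)) ≤ Real.exp (t * (-2 * Real.log r)) := by
    apply Real.exp_le_exp.2; nlinarith
  have h1' : Real.exp (t' * (-2 * Real.log r)) < Real.exp (t * (-2 * Real.log r)) := by
    apply Real.exp_lt_exp.2; nlinarith
  have h2 : Real.exp (t' * (-2 * Real.log s)) ≤ Real.exp (t * (-2 * Real.log s)) := by
    apply Real.exp_le_exp.2; nlinarith
  have h2' : Real.exp (t' * (-2 * Real.log s)) < Real.exp (t * (-2 * Real.log s)) := by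
    apply Real.exp_lt_exp.2; nlinarith
  rcases norm_pos_or p hp with h | h
  · have := mul_lt_mul_of_pos_left h1' (by positivity : (0:ℝ) < ‖p.1‖ ^ 2)
    have := mul_le_mul_of_nonneg_left h2 (by positivity : (0:ℝ) ≤ ‖p.2‖ ^ 2)
    unfold G; linarith
  · have := mul_le_mul_of_nonneg_left h1 (by positivity : (0:ℝ) ≤ ‖p.1‖ ^ 2)
    have := mul_lt_mul_of_pos_left h2' (by positivity : (0:ℝ) < ‖p.2‖ ^ 2)
    unfold G; linarith

lemma G_continuous (r s : ℝ) (p : ℂ × ℂ) : Continuous (G r s p) := by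
  unfold G; fun_prop

lemma G_exists_sol {r s : ℝ} (hr : 1 < r) (hs : 1 < s) {p : ℂ × ℂ} (hp : p ≠ 0) :
    ∃ t, G r s p t = 1 := by
  have hlr : 0 < Real.log r := Real.log_pos hr
  have hls : 0 < Real.log s := Real.log_pos hs
  -- tendsto to 0 at top
  have hexp : ∀ c : ℝ, c < 0 → Tendsto (fun t : ℝ => Real.exp (t * c)) atTop (𝓝 0) := by
    intro c hc
    exact Real.tendsto_exp_atBot.comp (tendsto_id.atTop_mul_const_of_neg hc)
  have htop : Tendsto (G r s p) atTop (𝓝 0) := by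
    have h1 := (hexp _ (by nlinarith : -2 * Real.log r < 0)).const_mul (‖p.1‖ ^ 2)
    have h2 := (hexp _ (by nlinarith : -2 * Real.log s < 0)).const_mul (‖p.2‖ ^ 2)
    have h12 := h1.add h2
    simp only [mul_zero, add_zero] at h12
    exact h12
  -- tendsto to atTop at bot
  have hexp' : ∀ c : ℝ, c < 0 → Tendsto (fun t : ℝ => Real.exp (t * c)) atBot atTop := by
    intro c hc
    exact Real.tendsto_exp_atTop.comp (tendsto_id.atBot_mul_const_of_neg hc)
  have hbot : Tendsto (G r s p) atBot atTop := by
    rcases norm_pos_or p hp with h | h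
    · have h1 := (hexp' _ (by nlinarith : -2 * Real.log r < 0)).const_mul_atTop
        (by positivity : (0:ℝ) < ‖p.1‖ ^ 2)
      refine tendsto_atTop_mono (fun t => ?_) h1
      unfold G; nlinarith [Real.exp_pos (t * (-2 * Real.log s)), sq_nonneg ‖p.2‖]
    · have h2 := (hexp' _ (by nlinarith : -2 * Real.log s < 0)).const_mul_atTop
        (by positivity : (0:ℝ) < ‖p.2‖ ^ 2)
      refine tendsto_atTop_mono (fun t => ?_) h2
      unfold G; nlinarith [Real.exp_pos (t * (-2 * Real.log r)), sq_nonneg ‖p.1‖]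
  obtain ⟨T₀, hT₀⟩ := eventually_atBot.1 (hbot.eventually_ge_atTop 1)
  obtain ⟨T₁, hT₁⟩ := eventually_atTop.1 (htop.eventually_lt_const (by norm_num : (0:ℝ) < 1))
  have h₀ : 1 ≤ G r s p (min T₀ T₁) := hT₀ _ (min_le_left _ _)
  have h₁ : G r s p (max T₀ T₁) < 1 := hT₁ _ (le_max_right _ _)
  have hsub := intermediate_value_Icc' (min_le_max (a := T₀) (b := T₁))
    (G_continuous r s p).continuousOn
  have : (1:ℝ) ∈ Set.Icc (G r s p (max T₀ T₁)) (G r s p (min T₀ T₁)) := ⟨h₁.le, h₀⟩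
  obtain ⟨t, _, ht⟩ := hsub this
  exact ⟨t, ht⟩

lemma F_contDiff (r s : ℝ) :
    ContDiff ℝ (⊤ : ℕ∞) (fun q : (ℂ × ℂ) × ℝ => G r s q.1 q.2) := by
  unfold G
  refine ContDiff.add (ContDiff.mul ?_ ?_) (ContDiff.mul ?_ ?_)
  · exact (contDiff_norm_sq ℂ (E := ℂ)).comp (contDiff_fst.comp contDiff_fst)
  · exact Real.contDiff_exp.comp (contDiff_snd.mul contDiff_const)
  · exact (contDiff_norm_sq ℂ (E := ℂ)).comp (contDiff_snd.comp contDiff_fst)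
  · exact Real.contDiff_exp.comp (contDiff_snd.mul contDiff_const)

lemma G_hasDerivAt (r s : ℝ) (p : ℂ × ℂ) (t : ℝ) :
    HasDerivAt (G r s p)
      (‖p.1‖ ^ 2 * (Real.exp (t * (-2 * Real.log r)) * (-2 * Real.log r)) +
        ‖p.2‖ ^ 2 * (Real.exp (t * (-2 * Real.log s)) * (-2 * Real.log s))) t := by
  have h1 : HasDerivAt (fun t : ℝ => t * (-2 * Real.log r)) (-2 * Real.log r) t :=
    hasDerivAt_mul_const _
  have h2 : HasDerivAt (fun t : ℝ => t * (-2 * Real.log s)) (-2 * Real.log s) t :=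
    hasDerivAt_mul_const _
  exact (h1.exp.const_mul _).add (h2.exp.const_mul _)

lemma G_deriv_neg {r s : ℝ} (hr : 1 < r) (hs : 1 < s) {p : ℂ × ℂ} (hp : p ≠ 0) (t : ℝ) :
    ‖p.1‖ ^ 2 * (Real.exp (t * (-2 * Real.log r)) * (-2 * Real.log r)) +
      ‖p.2‖ ^ 2 * (Real.exp (t * (-2 * Real.log s)) * (-2 * Real.log s)) < 0 := by
  have hlr : 0 < Real.log r := Real.log_pos hr
  have hls : 0 < Real.log s := Real.log_pos hs
  have e1 := Real.exp_pos (t * (-2 * Real.log r))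
  have e2 := Real.exp_pos (t * (-2 * Real.log s))
  rcases norm_pos_or p hp with h | h
  · have ht1 : ‖p.1‖ ^ 2 * (Real.exp (t * (-2 * Real.log r)) * (-2 * Real.log r)) < 0 :=
      mul_neg_of_pos_of_neg (pow_pos h 2) (by nlinarith)
    have ht2 : ‖p.2‖ ^ 2 * (Real.exp (t * (-2 * Real.log s)) * (-2 * Real.log s)) ≤ 0 :=
      mul_nonpos_of_nonneg_of_nonpos (by positivity) (by nlinarith)
    linarith
  · have ht1 : ‖p.1‖ ^ 2 * (Real.exp (t * (-2 * Real.log r)) * (-2 * Real.log r)) ≤ 0 :=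
      mul_nonpos_of_nonneg_of_nonpos (by positivity) (by nlinarith)
    have ht2 : ‖p.2‖ ^ 2 * (Real.exp (t * (-2 * Real.log s)) * (-2 * Real.log s)) < 0 :=
      mul_neg_of_pos_of_neg (pow_pos h 2) (by nlinarith)
    linarith

theorem main {r s : ℝ} (hr : 1 < r) (hs : 1 < s) :
    ∃ φ : ℂ × ℂ → ℝ, ContDiffOn ℝ (⊤ : ℕ∞) φ {p : ℂ × ℂ | p ≠ 0} ∧
      ∀ p : ℂ × ℂ, p ≠ 0 → G r s p (φ p) = 1 := by
  classical
  set φ : ℂ × ℂ → ℝ := fun p =>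
    if h : p ≠ 0 then (G_exists_sol hr hs h).choose else 0 with hφdef
  have hφ : ∀ p : ℂ × ℂ, p ≠ 0 → G r s p (φ p) = 1 := by
    intro p hp
    simp only [hφdef, dif_pos hp]
    exact (G_exists_sol hr hs hp).choose_spec
  have huniq : ∀ p : ℂ × ℂ, p ≠ 0 → ∀ t t' : ℝ, G r s p t = 1 → G r s p t' = 1 → t = t' :=
    fun p hp t t' h h' => (G_strictAnti hr hs hp).injective (h.trans h'.symm)
  refine ⟨φ, ?_, hφ⟩
  intro p₀ hp₀
  replace hp₀ : p₀ ≠ 0 := hp₀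
  suffices h : ContDiffAt ℝ (⊤ : ℕ∞) φ p₀ from h.contDiffWithinAt
  set F : (ℂ × ℂ) × ℝ → ℝ := fun q => G r s q.1 q.2 with hFdef
  set q₀ : (ℂ × ℂ) × ℝ := (p₀, φ p₀) with hq₀def
  have hF : ContDiff ℝ (⊤ : ℕ∞) F := F_contDiff r s
  have hL : HasFDerivAt F (fderiv ℝ F q₀) q₀ :=
    (hF.differentiable (by simp) q₀).hasFDerivAt
  set L : (ℂ × ℂ) × ℝ →L[ℝ] ℝ := fderiv ℝ F q₀ with hLdef
  -- the value of L at (0, 1) is the partial derivative in t, which is negative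
  have hcurve : HasDerivAt (fun t : ℝ => F (p₀, t)) (L ((0 : ℂ × ℂ), (1 : ℝ))) (φ p₀) := by
    have hc : HasDerivAt (fun t : ℝ => ((p₀, t) : (ℂ × ℂ) × ℝ)) ((0 : ℂ × ℂ), (1 : ℝ)) (φ p₀) :=
      (hasDerivAt_const _ _).prodMk (hasDerivAt_id _)
    exact hL.comp_hasDerivAt _ hc
  have hd_eq : L ((0 : ℂ × ℂ), (1 : ℝ)) =
      ‖p₀.1‖ ^ 2 * (Real.exp (φ p₀ * (-2 * Real.log r)) * (-2 * Real.log r)) +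
        ‖p₀.2‖ ^ 2 * (Real.exp (φ p₀ * (-2 * Real.log s)) * (-2 * Real.log s)) :=
    hcurve.unique (G_hasDerivAt r s p₀ (φ p₀))
  set d : ℝ := L ((0 : ℂ × ℂ), (1 : ℝ)) with hddef
  have hd0 : d ≠ 0 := by
    rw [hd_eq]
    exact (G_deriv_neg hr hs hp₀ (φ p₀)).ne
  -- split L
  have hLsplit : ∀ q : (ℂ × ℂ) × ℝ, L q = L (q.1, 0) + q.2 * d := by
    intro q
    have h1 : q = ((q.1, (0 : ℝ)) : (ℂ × ℂ) × ℝ) + (((0 : ℂ × ℂ), q.2) : (ℂ × ℂ) × ℝ) := by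
      ext <;> simp
    have h2 : (((0 : ℂ × ℂ), q.2) : (ℂ × ℂ) × ℝ) = q.2 • (((0 : ℂ × ℂ), (1 : ℝ))) := by
      ext <;> simp
    calc L q = L ((q.1, (0 : ℝ)) + (((0 : ℂ × ℂ), q.2))) := by rw [← h1]
    _ = L (q.1, 0) + L ((0 : ℂ × ℂ), q.2) := map_add L _ _
    _ = L (q.1, 0) + q.2 * d := by rw [h2, map_smul, smul_eq_mul, hddef]
  -- build the continuous linear equiv
  set A : ((ℂ × ℂ) × ℝ) →L[ℝ] ((ℂ × ℂ) × ℝ) :=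
    (ContinuousLinearMap.fst ℝ (ℂ × ℂ) ℝ).prod L with hAdef
  set B : ((ℂ × ℂ) × ℝ) →L[ℝ] ((ℂ × ℂ) × ℝ) :=
    (ContinuousLinearMap.fst ℝ (ℂ × ℂ) ℝ).prod
      (d⁻¹ • ((ContinuousLinearMap.snd ℝ (ℂ × ℂ) ℝ) -
        L.comp ((ContinuousLinearMap.fst ℝ (ℂ × ℂ) ℝ).prod 0))) with hBdef
  have hAapp : ∀ q : (ℂ × ℂ) × ℝ, A q = (q.1, L q) := fun q => rfl
  have hBapp : ∀ q : (ℂ × ℂ) × ℝ, B q = (q.1, d⁻¹ * (q.2 - L (q.1, 0))) := fun q => rfl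
  have hBA : Function.LeftInverse B A := by
    intro q
    rw [hAapp, hBapp]
    refine Prod.ext rfl ?_
    show d⁻¹ * (L q - L (q.1, 0)) = q.2
    rw [hLsplit q]
    field_simp
    ring
  have hAB : Function.RightInverse B A := by
    intro q
    rw [hBapp, hAapp]
    refine Prod.ext rfl ?_
    show L (q.1, d⁻¹ * (q.2 - L (q.1, 0))) = q.2
    rw [hLsplit (q.1, d⁻¹ * (q.2 - L (q.1, 0)))]
    show L (q.1, 0) + d⁻¹ * (q.2 - L (q.1, 0)) * d = q.2
    field_simp
    ring
  set e : ((ℂ × ℂ) × ℝ) ≃L[ℝ] ((ℂ × ℂ) × ℝ) :=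
    ContinuousLinearEquiv.equivOfInverse A B hBA hAB with hedef
  -- Φ and its derivative
  set Φ : (ℂ × ℂ) × ℝ → (ℂ × ℂ) × ℝ := fun q => (q.1, F q) with hΦdef
  have hΦsmooth : ContDiff ℝ (⊤ : ℕ∞) Φ := contDiff_fst.prodMk hF
  have hΦat : ContDiffAt ℝ (⊤ : ℕ∞) Φ q₀ := hΦsmooth.contDiffAt
  have hΦderiv : HasFDerivAt Φ (e : ((ℂ × ℂ) × ℝ) →L[ℝ] ((ℂ × ℂ) × ℝ)) q₀ := by
    have : HasFDerivAt Φ A q₀ := by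
      have h1 : HasFDerivAt (fun q : (ℂ × ℂ) × ℝ => q.1)
          (ContinuousLinearMap.fst ℝ (ℂ × ℂ) ℝ) q₀ := hasFDerivAt_fst
      exact h1.prodMk hL
    exact this
  have hstrict := hΦat.hasStrictFDerivAt' hΦderiv (by simp)
  set gloc : (ℂ × ℂ) × ℝ → (ℂ × ℂ) × ℝ := hstrict.localInverse Φ e q₀ with hglocdef
  have hglocCD : ContDiffAt ℝ (⊤ : ℕ∞) gloc (Φ q₀) := hΦat.to_localInverse hΦderiv (by simp)
  have hΦq₀ : Φ q₀ = (p₀, (1 : ℝ)) := by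
    simp only [hΦdef, hq₀def]
    exact Prod.ext rfl (hφ p₀ hp₀)
  have hright : ∀ᶠ y in 𝓝 ((p₀, (1 : ℝ)) : (ℂ × ℂ) × ℝ), Φ (gloc y) = y := by
    have := hstrict.eventually_right_inverse
    rwa [hΦq₀] at this
  -- the candidate smooth function
  have hins : ContDiffAt ℝ (⊤ : ℕ∞) (fun p : ℂ × ℂ => ((p, (1 : ℝ)) : (ℂ × ℂ) × ℝ)) p₀ :=
    (contDiff_id.prodMk contDiff_const).contDiffAt
  have hglocCD' : ContDiffAt ℝ (⊤ : ℕ∞) gloc ((p₀, (1 : ℝ)) : (ℂ × ℂ) × ℝ) := by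
    rwa [hΦq₀] at hglocCD
  have hh : ContDiffAt ℝ (⊤ : ℕ∞) (fun p : ℂ × ℂ => (gloc (p, 1)).2) p₀ :=
    contDiff_snd.contDiffAt.comp p₀ (hglocCD'.comp p₀ hins)
  refine hh.congr_of_eventuallyEq ?_
  have hmapsto : Tendsto (fun p : ℂ × ℂ => ((p, (1 : ℝ)) : (ℂ × ℂ) × ℝ)) (𝓝 p₀)
      (𝓝 ((p₀, (1 : ℝ)) : (ℂ × ℂ) × ℝ)) :=
    (continuous_id.prodMk continuous_const).tendsto p₀
  have h2 : ∀ᶠ p in 𝓝 p₀, Φ (gloc (p, 1)) = (p, 1) := hmapsto.eventually hright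
  have h3 : ∀ᶠ p in 𝓝 p₀, p ≠ 0 := isOpen_compl_singleton.eventually_mem hp₀
  filter_upwards [h2, h3] with p hΦp hp
  have hfst : (gloc (p, 1)).1 = p := congrArg Prod.fst hΦp
  have hsnd : F (gloc (p, 1)) = 1 := congrArg Prod.snd hΦp
  have hGp : G r s p ((gloc (p, 1)).2) = 1 := by
    have : F (gloc (p, 1)) = G r s ((gloc (p, 1)).1) ((gloc (p, 1)).2) := rfl
    rw [this, hfst] at hsnd
    exact hsnd
  exact huniq p hp _ _ (hφ p hp) hGp

end Stmt6Aux

/-- There is a `C^∞` function `φ` on `ℂ² \ {0}` solving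
`|z₁|² |a|^(-2φ) + |z₂|² |b|^(-2φ) = 1` there. -/
theorem stmt6 (a b : ℂ) (ha : 1 < ‖a‖) (hb : 1 < ‖b‖) :
    ∃ φ : ℂ × ℂ → ℝ,
      ContDiffOn ℝ (⊤ : ℕ∞) φ {p : ℂ × ℂ | p ≠ 0} ∧
      ∀ p : ℂ × ℂ, p ≠ 0 →
        ‖p.1‖ ^ 2 * ‖a‖ ^ (-(2 * φ p)) +
          ‖p.2‖ ^ 2 * ‖b‖ ^ (-(2 * φ p)) = 1 := by
  obtain ⟨φ, hsmooth, hsol⟩ := Stmt6Aux.main ha hb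
  refine ⟨φ, hsmooth, fun p hp => ?_⟩
  have h := hsol p hp
  unfold Stmt6Aux.G at h
  have e1 : ‖a‖ ^ (-(2 * φ p)) = Real.exp (φ p * (-2 * Real.log ‖a‖)) := by
    rw [Real.rpow_def_of_pos (lt_trans one_pos ha)]
    congr 1; ring
  have e2 : ‖b‖ ^ (-(2 * φ p)) = Real.exp (φ p * (-2 * Real.log ‖b‖)) := by
    rw [Real.rpow_def_of_pos (lt_trans one_pos hb)]
    congr 1; ring
  rw [e1, e2]
  simpa using h
end

section
/- Let φ : ℂ² \ {(0,0)} → ℝ be any function satisfying |z₁|² · |a|^(−2·φ(z₁,z₂)) + |z₂|² · |b|^(−2·φ(z₁,z₂)) = 1 for all (z₁, z₂) ≠ (0, 0), and define ψ̃(z₁, z₂) := ( φ(z₁,z₂) mod ℤ , z₁ · a^(−φ(z₁,z₂)) , z₂ · b^(−φ(z₁,z₂)) ) ∈ (ℝ/ℤ) × ℂ × ℂ. Then for all nonzero (z₁, z₂) and (w₁, w₂) in ℂ², one has ψ̃(z₁, z₂) = ψ̃(w₁, w₂) if and only if there exists an integer m with (w₁, w₂) = (aᵐ · z₁, bᵐ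 · z₂). In other words, the fibers of ψ̃ are exactly the orbits of the map γ : (z₁, z₂) ↦ (a·z₁, b·z₂). -/
/-!
For `z ≠ 0` the function `s ↦ ‖z₁‖² ‖a‖^(-2s) + ‖z₂‖² ‖b‖^(-2s)` is strictly decreasing, so `φ z`
is the unique level at which it equals `1`. Replacing `z` by `(aᵐ z₁, bᵐ z₂)` shifts this function
by `m`, hence `φ (aᵐ z₁, bᵐ z₂) = φ z + m`. Conversely, equal first components of `ψ̃` mean
`φ w = φ z + m` for some `m : ℤ`, and then `z₁ a^(-φ z) = w₁ a^(-φ w)` says exactly `w₁ = aᵐ z₁`.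
-/

theorem AddCircle.coe_eq_coe_iff_exists_zsmul {𝕜 : Type*} [AddCommGroup 𝕜] {p x y : 𝕜} :
    (x : AddCircle p) = y ↔ ∃ n : ℤ, y = x + n • p := by
  rw [eq_comm, ← sub_eq_zero, ← AddCircle.coe_sub, AddCircle.coe_eq_zero_iff]
  simp only [eq_comm (b := y - x), sub_eq_iff_eq_add']

theorem Complex.mul_cpow_neg_eq_iff {c u v : ℂ} (hc : c ≠ 0) (s : ℝ) (m : ℤ) :
    u * c ^ (-(s : ℂ)) = v * c ^ (-((s + m : ℝ) : ℂ)) ↔ v = c ^ m * u := by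
  have hsplit : c ^ (-(s : ℂ)) = c ^ m * c ^ (-((s + m : ℝ) : ℂ)) := by
    rw [← Complex.cpow_intCast, ← Complex.cpow_add _ _ hc]
    push_cast
    ring_nf
  have hne : c ^ (-((s + m : ℝ) : ℂ)) ≠ 0 := Complex.cpow_ne_zero_iff.2 (Or.inl hc)
  rw [hsplit, ← mul_assoc, mul_left_inj' hne, mul_comm u, eq_comm]

theorem strictAnti_mul_rpow_neg_two_mul {c x : ℝ} (hc : 0 < c) (hx : 1 < x) :
    StrictAnti fun s : ℝ => c * x ^ (-(2 * s)) := fun s t hst =>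
  mul_lt_mul_of_pos_left ((Real.rpow_lt_rpow_left_iff hx).2 (by linarith)) hc

theorem antitone_mul_rpow_neg_two_mul {c x : ℝ} (hc : 0 ≤ c) (hx : 1 < x) :
    Antitone fun s : ℝ => c * x ^ (-(2 * s)) := fun s t hst => by
  dsimp only
  gcongr
  exact hx.le

noncomputable def weightedNormSq (a b : ℂ) (z : ℂ × ℂ) (s : ℝ) : ℝ :=
  ‖z.1‖ ^ 2 * ‖a‖ ^ (-(2 * s)) + ‖z.2‖ ^ 2 * ‖b‖ ^ (-(2 * s))

theorem strictAnti_weightedNormSq {a b : ℂ} (ha : 1 < ‖a‖) (hb : 1 < ‖b‖) {z : ℂ × ℂ}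
    (hz : z ≠ 0) : StrictAnti (weightedNormSq a b z) := by
  obtain h1 | h2 : z.1 ≠ 0 ∨ z.2 ≠ 0 := by
    by_contra! h
    exact hz (Prod.ext h.1 h.2)
  · exact (strictAnti_mul_rpow_neg_two_mul (by positivity) ha).add_antitone
      (antitone_mul_rpow_neg_two_mul (by positivity) hb)
  · exact (antitone_mul_rpow_neg_two_mul (by positivity) ha).add_strictAnti
      (strictAnti_mul_rpow_neg_two_mul (by positivity) hb)

theorem norm_zpow_mul_sq_mul_rpow {c : ℂ} (hc : c ≠ 0) (u : ℂ) (s : ℝ) (m : ℤ) :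
    ‖c ^ m * u‖ ^ 2 * ‖c‖ ^ (-(2 * (s + m))) = ‖u‖ ^ 2 * ‖c‖ ^ (-(2 * s)) := by
  have hc' : 0 < ‖c‖ := norm_pos_iff.2 hc
  rw [norm_mul, norm_zpow, mul_pow, ← zpow_natCast (‖c‖ ^ m) 2, ← zpow_mul,
    ← Real.rpow_intCast, mul_right_comm, ← Real.rpow_add hc']
  push_cast
  ring_nf

theorem weightedNormSq_zpow_mul {a b : ℂ} (ha : a ≠ 0) (hb : b ≠ 0) (z : ℂ × ℂ) (s : ℝ) (m : ℤ) :
    weightedNormSq a b (a ^ m * z.1, b ^ m * z.2) (s + m) = weightedNormSq a b z s := by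
  simp only [weightedNormSq, norm_zpow_mul_sq_mul_rpow ha, norm_zpow_mul_sq_mul_rpow hb]

/-- The fibers of the map `ψ̃(z₁,z₂) = (φ(z) mod ℤ, z₁ a^(-φ z), z₂ b^(-φ z))`
are exactly the orbits of `γ : (z₁,z₂) ↦ (a z₁, b z₂)`. -/
theorem stmt8 (a b : ℂ) (ha : 1 < ‖a‖) (hb : 1 < ‖b‖)
    (φ : ℂ × ℂ → ℝ)
    (hφ : ∀ z : ℂ × ℂ, z ≠ 0 →
      ‖z.1‖ ^ 2 * ‖a‖ ^ (-(2 * φ z)) +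
        ‖z.2‖ ^ 2 * ‖b‖ ^ (-(2 * φ z)) = 1)
    (z w : ℂ × ℂ) (hz : z ≠ 0) (hw : w ≠ 0) :
    (((φ z : AddCircle (1 : ℝ)), z.1 * a ^ (-(φ z : ℂ)), z.2 * b ^ (-(φ z : ℂ)))
      = ((φ w : AddCircle (1 : ℝ)), w.1 * a ^ (-(φ w : ℂ)), w.2 * b ^ (-(φ w : ℂ))))
      ↔ ∃ m : ℤ, w = (a ^ m * z.1, b ^ m * z.2) := by
  have ha0 : a ≠ 0 := norm_pos_iff.1 (by linarith)
  have hb0 : b ≠ 0 := norm_pos_iff.1 (by linarith)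
  simp only [Prod.mk.injEq, AddCircle.coe_eq_coe_iff_exists_zsmul, zsmul_one]
  constructor
  · rintro ⟨⟨m, hm⟩, h1, h2⟩
    rw [hm] at h1 h2
    exact ⟨m, Prod.ext ((Complex.mul_cpow_neg_eq_iff ha0 _ m).1 h1)
      ((Complex.mul_cpow_neg_eq_iff hb0 _ m).1 h2)⟩
  · rintro ⟨m, rfl⟩
    have hshift : φ (a ^ m * z.1, b ^ m * z.2) = φ z + m := by
      rw [← sub_eq_iff_eq_add]
      refine (strictAnti_weightedNormSq ha hb hz).injective ?_
      rw [← weightedNormSq_zpow_mul ha0 hb0, sub_add_cancel]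
      exact (hφ _ hw).trans (hφ z hz).symm
    rw [hshift]
    exact ⟨⟨m, rfl⟩, (Complex.mul_cpow_neg_eq_iff ha0 _ m).2 rfl,
      (Complex.mul_cpow_neg_eq_iff hb0 _ m).2 rfl⟩
end

section
/- Let φ : ℂ² \ {(0,0)} → ℝ be any function satisfying |z₁|² · |a|^(−2·φ(z₁,z₂)) + |z₂|² · |b|^(−2·φ(z₁,z₂)) = 1 for all (z₁, z₂) ≠ (0, 0), and define ψ̃(z₁, z₂) := ( φ(z₁,z₂) mod ℤ , z₁ · a^(−φ(z₁,z₂)) , z₂ · b^(−φ(z₁,z₂)) ) ∈ (ℝ/ℤ) × ℂ × ℂ. Then ψ̃ is surjective onto (ℝ/ℤ) × S³, where S³ = { (u₁, u₂) ∈ ℂ² : |u₁|² + |u₂|² = 1 }: for every s ∈ ℝ and every (u₁, u₂) ∈ ℂ² with |u₁|² + |u₂|² = 1, there exists a nonzero (z₁, z₂) ∈ ℂ² with ψ̃(z₁, z₂) = ( s mod ℤ , u₁ , u₂ ). -/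
/-!
Put `z = (u₁ a^s, u₂ b^s)`. Then `‖z₁‖² ‖a‖^(-2t) + ‖z₂‖² ‖b‖^(-2t)` equals `‖u₁‖² + ‖u₂‖² = 1`
at `t = s`, and it is strictly decreasing in `t` because `‖a‖, ‖b‖ > 1`. So the defining
equation of `φ z` has the unique solution `s`, i.e. `φ z = s`, and then `z₁ a^(-s) = u₁`,
`z₂ b^(-s) = u₂`.
-/

open Real

lemma strictAnti_rpow_neg_of_one_lt {A : ℝ} (hA : 1 < A) : StrictAnti fun t : ℝ => A ^ (-t) :=
  (strictMono_rpow_of_base_gt_one hA).comp_strictAnti fun _ _ h => neg_lt_neg h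

lemma strictAnti_mul_rpow_neg_add_mul_rpow_neg {A B c₁ c₂ : ℝ} (hA : 1 < A) (hB : 1 < B)
    (hc₁ : 0 ≤ c₁) (hc₂ : 0 ≤ c₂) (hc : 0 < c₁ ∨ 0 < c₂) :
    StrictAnti fun t : ℝ => c₁ * A ^ (-t) + c₂ * B ^ (-t) := by
  have hfA := strictAnti_rpow_neg_of_one_lt hA
  have hfB := strictAnti_rpow_neg_of_one_lt hB
  rcases hc with hc₁ | hc₂
  · exact (hfA.const_mul hc₁).add_antitone (hfB.antitone.const_mul hc₂)
  · exact (hfA.antitone.const_mul hc₁).add_strictAnti (hfB.const_mul hc₂)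

lemma sq_norm_mul_cpow_mul_rpow {a : ℂ} (ha : a ≠ 0) (u : ℂ) (s : ℝ) :
    ‖u * a ^ (s : ℂ)‖ ^ 2 * ‖a‖ ^ (-(2 * s)) = ‖u‖ ^ 2 := by
  have ha' : 0 < ‖a‖ := norm_pos_iff.2 ha
  rw [norm_mul, Complex.norm_cpow_real, mul_pow, ← rpow_mul_natCast ha'.le, mul_assoc,
    ← rpow_add ha', mul_comm s, Nat.cast_ofNat, add_neg_cancel, rpow_zero, mul_one]

lemma mul_cpow_mul_cpow_neg {a : ℂ} (ha : a ≠ 0) (u x : ℂ) : u * a ^ x * a ^ (-x) = u := by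
  rw [Complex.cpow_neg, mul_inv_cancel_right₀ (Complex.cpow_ne_zero_iff.2 (Or.inl ha))]

/-- The map `ψ̃(z₁,z₂) = (φ(z) mod ℤ, z₁ a^(-φ z), z₂ b^(-φ z))` is surjective
onto `(ℝ/ℤ) × S³`. -/
theorem stmt9 (a b : ℂ) (ha : 1 < ‖a‖) (hb : 1 < ‖b‖)
    (φ : ℂ × ℂ → ℝ)
    (hφ : ∀ z : ℂ × ℂ, z ≠ 0 →
      ‖z.1‖ ^ 2 * ‖a‖ ^ (-(2 * φ z)) +
        ‖z.2‖ ^ 2 * ‖b‖ ^ (-(2 * φ z)) = 1)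
    (s : ℝ) (u : ℂ × ℂ)
    (hu : ‖u.1‖ ^ 2 + ‖u.2‖ ^ 2 = 1) :
    ∃ z : ℂ × ℂ, z ≠ 0 ∧
      ((φ z : AddCircle (1 : ℝ)), z.1 * a ^ (-(φ z : ℂ)), z.2 * b ^ (-(φ z : ℂ)))
        = ((s : AddCircle (1 : ℝ)), u.1, u.2) := by
  have ha₀ : a ≠ 0 := norm_pos_iff.1 (one_pos.trans ha)
  have hb₀ : b ≠ 0 := norm_pos_iff.1 (one_pos.trans hb)
  set z : ℂ × ℂ := (u.1 * a ^ (s : ℂ), u.2 * b ^ (s : ℂ))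
  have hu₀ : u.1 ≠ 0 ∨ u.2 ≠ 0 := by
    by_contra! h
    simp [h] at hu
  have hz : z.1 ≠ 0 ∨ z.2 ≠ 0 :=
    hu₀.imp (mul_ne_zero · (Complex.cpow_ne_zero_iff.2 (Or.inl ha₀)))
      (mul_ne_zero · (Complex.cpow_ne_zero_iff.2 (Or.inl hb₀)))
  have hz₀ : z ≠ 0 := fun h => by simp [h] at hz
  have hzs : ‖z.1‖ ^ 2 * ‖a‖ ^ (-(2 * s)) + ‖z.2‖ ^ 2 * ‖b‖ ^ (-(2 * s)) = 1 := by
    rw [sq_norm_mul_cpow_mul_rpow ha₀, sq_norm_mul_cpow_mul_rpow hb₀, hu]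
  have hφz : φ z = s := by
    have hanti := strictAnti_mul_rpow_neg_add_mul_rpow_neg ha hb (sq_nonneg ‖z.1‖)
      (sq_nonneg ‖z.2‖) (hz.imp (fun h => by positivity) (fun h => by positivity))
    have := hanti.injective ((hφ z hz₀).trans hzs.symm)
    linarith
  refine ⟨z, hz₀, ?_⟩
  rw [hφz, mul_cpow_mul_cpow_neg ha₀, mul_cpow_mul_cpow_neg hb₀]
end

section
/- Let λ > 0 be a real number with λ ≠ 1 and let h : ℝ → ℝ be continuous with h(t + 1) = h(t) for all t. Set k := (λ − 1)⁻¹ · ∫₀¹ λˣ · h(x) dx and define f : ℝ → ℝ by f(t) := λ^(−t) · ( k + ∫₀ᵗ λˣ · h(x) dx ). Then f is differentiable, f satisfies f′(t) + (log λ) · f(t) = h(t) for all t ∈ ℝ, and f is periodic with period 1, i.e. f(t + 1) = f(t) for all t ∈ ℝ. -/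
/-!
Differentiating `f t = λ^(-t) (k + ∫₀ᵗ λˣ h)` with the fundamental theorem of calculus gives the
equation for every `k`. For periodicity, the substitution `x ↦ x + 1` and the periodicity of `h`
give `∫₁^{t+1} λˣ h = λ ∫₀ᵗ λˣ h`, and `k` is exactly the constant for which
`k + ∫₀¹ λˣ h = λ k`; hence `k + ∫₀^{t+1} λˣ h = λ (k + ∫₀ᵗ λˣ h)`, which cancels the extra
factor `λ⁻¹` in `λ^(-(t+1))`.
-/

open Real intervalIntegral

lemma continuous_rpow_mul {l : ℝ} (hl : 0 < l) {h : ℝ → ℝ} (hc : Continuous h) :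
    Continuous fun x => l ^ x * h x :=
  (continuous_const.rpow continuous_id fun _ => Or.inl hl.ne').mul hc

lemma hasDerivAt_rpow_neg_mul {l : ℝ} (hl : 0 < l) {g G : ℝ → ℝ} {t : ℝ}
    (hG : HasDerivAt G (l ^ t * g t) t) :
    HasDerivAt (fun s => l ^ (-s) * G s) (g t - log l * (l ^ (-t) * G t)) t := by
  have hpow : HasDerivAt (fun s : ℝ => l ^ (-s)) (l ^ (-t) * log l * -1) t :=
    (hasStrictDerivAt_const_rpow hl (-t)).hasDerivAt.comp t (hasDerivAt_neg t)
  refine (hpow.mul hG).congr_deriv ?_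
  have hinv : l ^ (-t) * l ^ t = 1 := by rw [← rpow_add hl, neg_add_cancel, rpow_zero]
  linear_combination g t * hinv

lemma integral_rpow_mul_add_period {l T : ℝ} (hl : 0 < l) {h : ℝ → ℝ}
    (hper : Function.Periodic h T) (t : ℝ) :
    ∫ x in T..t + T, l ^ x * h x = l ^ T * ∫ x in 0..t, l ^ x * h x := by
  have hsub := integral_comp_add_right (fun x => l ^ x * h x) T (a := 0) (b := t)
  rw [zero_add] at hsub
  rw [← hsub, ← integral_const_mul]
  congr 1 with x
  rw [hper, rpow_add hl]
  ring

lemma add_integral_rpow_mul_add_period {l T k : ℝ} (hl : 0 < l) (hlT : l ^ T ≠ 1) {h : ℝ → ℝ}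
    (hc : Continuous h) (hper : Function.Periodic h T)
    (hk : k = (l ^ T - 1)⁻¹ * ∫ x in 0..T, l ^ x * h x) (t : ℝ) :
    k + ∫ x in 0..t + T, l ^ x * h x = l ^ T * (k + ∫ x in 0..t, l ^ x * h x) := by
  have hcont := continuous_rpow_mul hl hc
  have hperiod : ∫ x in 0..T, l ^ x * h x = (l ^ T - 1) * k := by
    rw [hk, mul_inv_cancel_left₀ (sub_ne_zero.mpr hlT)]
  rw [← integral_add_adjacent_intervals (hcont.intervalIntegrable 0 T)
    (hcont.intervalIntegrable T (t + T)), integral_rpow_mul_add_period hl hper, hperiod]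
  ring

/-- The explicit function `f(t) = λ^(-t) (k + ∫₀ᵗ λˣ h(x) dx)`, with
`k = (λ-1)⁻¹ ∫₀¹ λˣ h(x) dx`, is a differentiable 1-periodic solution of
`f' + (log λ) f = h` for 1-periodic continuous `h`. -/
theorem stmt10 (l : ℝ) (hl : 0 < l) (hl1 : l ≠ 1)
    (h : ℝ → ℝ) (hc : Continuous h) (hper : ∀ t, h (t + 1) = h t)
    (k : ℝ) (hk : k = (l - 1)⁻¹ * ∫ x in (0 : ℝ)..1, l ^ x * h x)
    (f : ℝ → ℝ)
    (hf : ∀ t, f t = l ^ (-t) * (k + ∫ x in (0 : ℝ)..t, l ^ x * h x)) :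
    Differentiable ℝ f ∧
      (∀ t, deriv f t + Real.log l * f t = h t) ∧
      (∀ t, f (t + 1) = f t) := by
  have hcont := continuous_rpow_mul hl hc
  have hderiv : ∀ t, HasDerivAt f (h t - log l * f t) t := fun t => by
    rw [hf t, funext hf]
    exact hasDerivAt_rpow_neg_mul hl ((hcont.integral_hasStrictDerivAt 0 t).hasDerivAt.const_add k)
  refine ⟨fun t => (hderiv t).differentiableAt, fun t => by rw [(hderiv t).deriv]; ring, fun t => ?_⟩
  have hshift := add_integral_rpow_mul_add_period (k := k) hl (by rwa [rpow_one]) hc hper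
    (by rw [rpow_one]; exact hk) t
  rw [hf, hf, hshift, rpow_one, ← mul_assoc, neg_add, rpow_add hl, rpow_neg_one,
    inv_mul_cancel_right₀ hl.ne']
end

section
/- Let λ > 0 be a real number with λ ≠ 1 and let h : ℝ → ℝ be continuous with h(t + 1) = h(t) for all t. Then there exists exactly one differentiable function f : ℝ → ℝ such that f(t + 1) = f(t) for all t ∈ ℝ and f′(t) + (log λ) · f(t) = h(t) for all t ∈ ℝ. -/
/-!
Writing the equation as `f' = h - a f` with `a = log λ`, variation of constants gives the
solutions `f_c t = e^{-at} (c + ∫₀ᵗ e^{as} h s ds)`. For any solution `f`, the difference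
`f (t + T) - f t` solves the homogeneous equation `u' = -a u`, whose solutions are
`u t = e^{-at} u 0`; so a solution is `T`-periodic as soon as `f T = f 0`, which singles out
one value of `c` because `e^{aT} ≠ 1`. The same formula shows that a `T`-periodic solution
of the homogeneous equation vanishes, which gives uniqueness.
-/

open Real Function

noncomputable def linearODESolution (a : ℝ) (h : ℝ → ℝ) (c t : ℝ) : ℝ :=
  exp (-(a * t)) * (c + ∫ s in (0 : ℝ)..t, exp (a * s) * h s)

theorem linearODESolution_zero (a : ℝ) (h : ℝ → ℝ) (c : ℝ) : linearODESolution a h c 0 = c := by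
  simp [linearODESolution]

theorem hasDerivAt_linearODESolution (a : ℝ) {h : ℝ → ℝ} (hh : Continuous h) (c t : ℝ) :
    HasDerivAt (linearODESolution a h c) (h t - a * linearODESolution a h c t) t := by
  have hE : Continuous fun s => exp (a * s) * h s := by fun_prop
  have hint : HasDerivAt (fun t => c + ∫ s in (0 : ℝ)..t, exp (a * s) * h s)
      (exp (a * t) * h t) t :=
    (intervalIntegral.integral_hasDerivAt_right (hE.intervalIntegrable 0 t)
      (hE.stronglyMeasurableAtFilter _ _) hE.continuousAt).const_add c
  have hexp : HasDerivAt (fun t => exp (-(a * t))) (exp (-(a * t)) * -a) t :=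
    ((hasDerivAt_id t).const_mul a).neg.exp.congr_deriv (by simp)
  refine (hexp.mul hint).congr_deriv ?_
  rw [linearODESolution, ← mul_assoc, ← exp_add, neg_add_cancel, exp_zero]
  ring

theorem eq_exp_mul_of_hasDerivAt_eq_neg_mul {a : ℝ} {u : ℝ → ℝ}
    (hu : ∀ t, HasDerivAt u (-a * u t) t) (t : ℝ) : u t = exp (-(a * t)) * u 0 := by
  have hw : ∀ s, HasDerivAt (fun s => exp (a * s) * u s) 0 s := fun s =>
    (((hasDerivAt_id s).const_mul a).exp.mul (hu s)).congr_deriv (by simp; ring)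
  have hconst := is_const_of_deriv_eq_zero (fun s => (hw s).differentiableAt)
    (fun s => (hw s).deriv) t 0
  simp only [mul_zero, exp_zero, one_mul] at hconst
  rw [← hconst, ← mul_assoc, ← exp_add, neg_add_cancel, exp_zero, one_mul]

theorem eq_zero_of_periodic_of_hasDerivAt_eq_neg_mul {a T : ℝ} (haT : a * T ≠ 0) {u : ℝ → ℝ}
    (hu : ∀ t, HasDerivAt u (-a * u t) t) (hper : Periodic u T) : u = 0 := by
  have hexp : exp (-(a * T)) ≠ 1 := by simpa using haT
  have hu0 : u 0 = 0 := by
    have hT := eq_exp_mul_of_hasDerivAt_eq_neg_mul hu T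
    rw [show u T = u 0 by simpa using hper 0] at hT
    have : (exp (-(a * T)) - 1) * u 0 = 0 := by linarith
    exact (mul_eq_zero.mp this).resolve_left (sub_ne_zero.mpr hexp)
  funext t
  rw [eq_exp_mul_of_hasDerivAt_eq_neg_mul hu t, hu0, mul_zero, Pi.zero_apply]

theorem periodic_of_hasDerivAt_of_eq {a T : ℝ} {h f : ℝ → ℝ} (hper : Periodic h T)
    (hf : ∀ t, HasDerivAt f (h t - a * f t) t) (hT : f T = f 0) : Periodic f T := by
  set u : ℝ → ℝ := fun t => f (t + T) - f t
  have hu : ∀ t, HasDerivAt u (-a * u t) t := fun t =>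
    (((hf (t + T)).comp_add_const t T).sub (hf t)).congr_deriv (by simp [u, hper t]; ring)
  intro t
  have := eq_exp_mul_of_hasDerivAt_eq_neg_mul hu t
  simp only [u, zero_add, hT, sub_self, mul_zero] at this
  linarith

theorem existsUnique_periodic_solution {a T : ℝ} (haT : a * T ≠ 0) {h : ℝ → ℝ}
    (hh : Continuous h) (hper : Periodic h T) :
    ∃! f : ℝ → ℝ, Differentiable ℝ f ∧ Periodic f T ∧ ∀ t, deriv f t + a * f t = h t := by
  have hexp : exp (a * T) - 1 ≠ 0 := sub_ne_zero.mpr (by simpa using haT)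
  set I := ∫ s in (0 : ℝ)..T, exp (a * s) * h s
  set f := linearODESolution a h (I / (exp (a * T) - 1))
  have hf := hasDerivAt_linearODESolution a hh (I / (exp (a * T) - 1))
  have hfT : f T = f 0 := by
    rw [show f 0 = _ from linearODESolution_zero a h _]
    change exp (-(a * T)) * (_ + I) = _
    rw [exp_neg]
    field_simp
    ring
  have hfper : Periodic f T := periodic_of_hasDerivAt_of_eq hper hf hfT
  refine ⟨f, ⟨fun t => (hf t).differentiableAt, hfper,
    fun t => by rw [(hf t).deriv]; ring⟩, ?_⟩
  rintro g ⟨hgd, hgper, hg⟩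
  have hgf : ∀ t, HasDerivAt (g - f) (-a * (g - f) t) t := fun t =>
    ((hgd t).hasDerivAt.sub (hf t)).congr_deriv (by simp; linarith [hg t])
  exact sub_eq_zero.mp (eq_zero_of_periodic_of_hasDerivAt_eq_neg_mul haT hgf (hgper.sub hfper))

/-- For `λ > 0`, `λ ≠ 1` and continuous 1-periodic `h`, there is exactly one
differentiable 1-periodic `f` with `f' + (log λ) f = h`. -/
theorem stmt12 (l : ℝ) (hl : 0 < l) (hl1 : l ≠ 1)
    (h : ℝ → ℝ) (hc : Continuous h) (hper : ∀ t, h (t + 1) = h t) :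
    ∃! f : ℝ → ℝ, Differentiable ℝ f ∧
      (∀ t, f (t + 1) = f t) ∧
      (∀ t, deriv f t + Real.log l * f t = h t) :=
  existsUnique_periodic_solution (by simpa using Real.log_ne_zero_of_pos_of_ne_one hl hl1) hc hper
end
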